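/- arXiv:1905.10143 — 8 statements merged into one kernel-verified Lean document; each statement's English description precedes it below -/
import Mathlib

section
/- Given an (ε₁,ε₂)-significant instance with clusters C*_1,…,C*_k and η, δ ∈ (0,1), if m is a positive integer with m ≥ (3k/(δ²ε₁))·log(2k/η) and s : {1,…,m} → P is an i.i.d. uniform sample from P, then with probability at least 1 − η, for every j ∈ {1,…,k} the count satisfies (1−δ)·(|C*_j|/n)·m ≤ |{i : s_i ∈ C*_j}| ≤ (1+δ)·(|C*_j|/n)·m. -/
/-!
Chernoff's method, carried out by counting. If a cluster has density `p = |C|/n` in `P` and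
`X s` is the number of points of the sample `s` in it, the exponential moment factorises over
the `m` independent draws: `∑ₛ exp (l X s) = (n + (eˡ - 1)|C|)ᵐ ≤ nᵐ exp ((eˡ - 1) p m)`.
Markov's inequality with `l = log (1 ± δ)` and the elementary bounds
`(1 + δ) log (1 + δ) - δ ≥ δ²/3` and `(1 - δ) log (1 - δ) + δ ≥ δ²/2` bound the two tails by
`exp (-δ² p m / 3)` and `exp (-δ² p m / 2)`. Significance gives `p ≥ ε₁/k`, so the sample size
makes both at most `η/(2k)`, and a union bound over the `2k` tails concludes.
-/

open Finset Real

theorem card_filter_coe_mem {α : Type*} [DecidableEq α] {P Q : Finset α} (h : Q ⊆ P) :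
    #{x : ↥P | (x : α) ∈ Q} = #Q := by
  rw [← card_map (Function.Embedding.subtype _)]
  congr 1
  ext a
  simp only [mem_map, mem_filter, mem_univ, true_and, Function.Embedding.subtype_apply]
  exact ⟨fun ⟨x, hx, hxa⟩ => hxa ▸ hx, fun ha => ⟨⟨a, h ha⟩, ha, rfl⟩⟩

theorem sq_div_three_le_one_add_mul_log_one_add_sub {δ : ℝ} (h0 : 0 ≤ δ) (h1 : δ ≤ 1) :
    δ ^ 2 / 3 ≤ (1 + δ) * log (1 + δ) - δ := by
  have hlog := le_log_one_add_of_nonneg h0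
  calc δ ^ 2 / 3 ≤ δ ^ 2 / (δ + 2) := by gcongr; linarith
    _ = (1 + δ) * (2 * δ / (δ + 2)) - δ := by field_simp; ring
    _ ≤ (1 + δ) * log (1 + δ) - δ := by gcongr

theorem sq_div_two_le_one_sub_mul_log_one_sub_add {δ : ℝ} (h0 : 0 ≤ δ) (h1 : δ < 1) :
    δ ^ 2 / 2 ≤ (1 - δ) * log (1 - δ) + δ := by
  have h2 : 0 < 2 - δ := by linarith
  have h3 : 0 < 1 - δ := by linarith
  have hx0 : 0 ≤ δ / (2 - δ) := div_nonneg h0 h2.le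
  have hx1 : δ / (2 - δ) < 1 := by rw [div_lt_one h2]; linarith
  -- The `n = 0` case of `log_div_le_sum_range_add` at `x = δ/(2-δ)`, where `(1+x)/(1-x) = (1-δ)⁻¹`,
  -- reads `-log (1 - δ) ≤ δ (2 - δ) / (2 (1 - δ))`.
  have hlog := log_div_le_sum_range_add hx0 hx1 0
  have hplus : 1 + δ / (2 - δ) = 2 / (2 - δ) := by rw [one_add_div h2.ne']; ring_nf
  have hminus : 1 - δ / (2 - δ) = 2 * (1 - δ) / (2 - δ) := by rw [one_sub_div h2.ne']; ring_nf
  have hsq : 1 - (δ / (2 - δ)) ^ 2 = (1 + δ / (2 - δ)) * (1 - δ / (2 - δ)) := by ring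
  rw [sum_range_zero, zero_add, mul_zero, zero_add, pow_one, hsq, hplus, hminus] at hlog
  have hratio : 2 / (2 - δ) / (2 * (1 - δ) / (2 - δ)) = (1 - δ)⁻¹ := by
    field_simp
  have hbound : δ / (2 - δ) / (2 / (2 - δ) * (2 * (1 - δ) / (2 - δ))) =
      δ * (2 - δ) / (4 * (1 - δ)) := by
    field_simp [h2.ne']; ring
  rw [hratio, hbound, log_inv] at hlog
  have : -log (1 - δ) * (1 - δ) ≤ δ * (2 - δ) / 2 := by
    rw [← le_div_iff₀ h3]; field_simp at hlog ⊢; linarith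
  nlinarith

theorem card_filter_not_and_le {Ω : Type*} [Fintype Ω] (p r : Ω → Prop)
    [DecidablePred p] [DecidablePred r] :
    #{ω | ¬(p ω ∧ r ω)} ≤ #{ω | ¬p ω} + #{ω | ¬r ω} := by
  classical
  simp only [not_and_or, filter_or]
  exact card_union_le _ _

theorem card_mul_exp_le_sum_exp {Ω : Type*} [Fintype Ω] (X : Ω → ℝ) (t : ℝ) :
    #{ω | t ≤ X ω} * exp t ≤ ∑ ω, exp (X ω) := by
  calc #{ω | t ≤ X ω} * exp t = ∑ ω with t ≤ X ω, exp t := by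
        rw [sum_const, nsmul_eq_mul]
    _ ≤ ∑ ω with t ≤ X ω, exp (X ω) :=
        sum_le_sum fun ω hω => exp_le_exp.2 (mem_filter.1 hω).2
    _ ≤ ∑ ω, exp (X ω) :=
        sum_le_sum_of_subset_of_nonneg (subset_univ _) fun _ _ _ => (exp_pos _).le

section Sampling

variable {α : Type*} [Fintype α] (q : α → Prop) [DecidablePred q]

theorem sum_ite_eq_card_add_sub_one_mul (x : ℝ) :
    ∑ a, (if q a then x else 1) = Fintype.card α + (x - 1) * #{a | q a} := by
  have hcard : (#{a | q a} + #{a | ¬q a} : ℝ) = Fintype.card α := by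
    exact_mod_cast card_filter_add_card_filter_not (s := univ) q
  rw [sum_ite, sum_const, sum_const, nsmul_eq_mul, nsmul_eq_mul, mul_one, ← hcard]
  ring

theorem sum_exp_mul_card_filter (m : ℕ) (l : ℝ) :
    ∑ s : Fin m → α, exp (l * #{i | q (s i)}) =
      (Fintype.card α + (exp l - 1) * #{a | q a}) ^ m := by
  rw [← sum_ite_eq_card_add_sub_one_mul, Fintype.sum_pow]
  refine sum_congr rfl fun s _ => ?_
  rw [← prod_filter, prod_const, mul_comm, exp_nat_mul]

theorem card_add_sub_one_mul_le_card_mul_exp [Nonempty α] (x : ℝ) :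
    Fintype.card α + (x - 1) * #{a | q a} ≤
      Fintype.card α * exp ((x - 1) * (#{a | q a} / Fintype.card α)) := by
  have hN : (0 : ℝ) < Fintype.card α := by exact_mod_cast Fintype.card_pos
  calc (Fintype.card α : ℝ) + (x - 1) * #{a | q a}
      = Fintype.card α * ((x - 1) * (#{a | q a} / Fintype.card α) + 1) := by
        field_simp; ring
    _ ≤ _ := mul_le_mul_of_nonneg_left (add_one_le_exp _) hN.le

variable [Nonempty α] (m : ℕ)

theorem chernoff_card_le (l t : ℝ) :
    (#{s : Fin m → α | l * t ≤ l * #{i | q (s i)}} : ℝ) ≤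
      Fintype.card α ^ m * exp ((exp l - 1) * (#{a | q a} / Fintype.card α * m) - l * t) := by
  have hnonneg : 0 ≤ (Fintype.card α : ℝ) + (exp l - 1) * #{a | q a} := by
    have : (#{a | q a} : ℝ) ≤ Fintype.card α := by exact_mod_cast card_le_univ _
    nlinarith [exp_pos l, Nat.cast_nonneg (α := ℝ) #{a | q a}]
  have hmoment : (#{s : Fin m → α | l * t ≤ l * #{i | q (s i)}} : ℝ) * exp (l * t) ≤
      Fintype.card α ^ m * exp ((exp l - 1) * (#{a | q a} / Fintype.card α * m)) :=
    calc _ ≤ ∑ s : Fin m → α, exp (l * #{i | q (s i)}) := card_mul_exp_le_sum_exp _ _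
      _ = (Fintype.card α + (exp l - 1) * #{a | q a}) ^ m := sum_exp_mul_card_filter q m l
      _ ≤ (Fintype.card α * exp ((exp l - 1) * (#{a | q a} / Fintype.card α))) ^ m :=
        pow_le_pow_left₀ hnonneg (card_add_sub_one_mul_le_card_mul_exp q _) m
      _ = _ := by rw [mul_pow, ← exp_nat_mul]; ring_nf
  rw [sub_eq_add_neg, exp_add, ← mul_assoc, exp_neg, ← div_eq_mul_inv, le_div_iff₀ (exp_pos _)]
  exact hmoment

theorem chernoff_card_upper_tail_le {δ : ℝ} (h0 : 0 ≤ δ) (h1 : δ ≤ 1) :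
    (#{s : Fin m → α | (1 + δ) * (#{a | q a} / Fintype.card α) * m < #{i | q (s i)}} : ℝ) ≤
      Fintype.card α ^ m * exp (-(δ ^ 2 * (#{a | q a} / Fintype.card α * m) / 3)) := by
  set μ : ℝ := #{a | q a} / Fintype.card α * m
  have hμ0 : 0 ≤ μ := by positivity
  have hl : 0 ≤ log (1 + δ) := log_nonneg (by linarith)
  calc _ ≤ (#{s : Fin m → α | log (1 + δ) * ((1 + δ) * μ) ≤ log (1 + δ) * #{i | q (s i)}} : ℝ) := by
        gcongr with s
        intro hs
        exact mul_le_mul_of_nonneg_left (by linarith) hl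
    _ ≤ _ := chernoff_card_le q m _ _
    _ ≤ _ := by
        rw [exp_log (by linarith)]
        gcongr
        nlinarith [sq_div_three_le_one_add_mul_log_one_add_sub h0 h1]

theorem chernoff_card_lower_tail_le {δ : ℝ} (h0 : 0 ≤ δ) (h1 : δ < 1) :
    (#{s : Fin m → α | #{i | q (s i)} < (1 - δ) * (#{a | q a} / Fintype.card α) * m} : ℝ) ≤
      Fintype.card α ^ m * exp (-(δ ^ 2 * (#{a | q a} / Fintype.card α * m) / 2)) := by
  set μ : ℝ := #{a | q a} / Fintype.card α * m
  have hμ0 : 0 ≤ μ := by positivity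
  have hl : log (1 - δ) ≤ 0 := log_nonpos (by linarith) (by linarith)
  calc _ ≤ (#{s : Fin m → α | log (1 - δ) * ((1 - δ) * μ) ≤ log (1 - δ) * #{i | q (s i)}} : ℝ) := by
        gcongr with s
        intro hs
        exact mul_le_mul_of_nonpos_left (by linarith) hl
    _ ≤ _ := chernoff_card_le q m _ _
    _ ≤ _ := by
        rw [exp_log (by linarith)]
        gcongr
        nlinarith [sq_div_two_le_one_sub_mul_log_one_sub_add h0 h1]

theorem chernoff_card_not_mem_Icc_div_le {δ : ℝ} (h0 : 0 ≤ δ) (h1 : δ < 1) :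
    (#{s : Fin m → α | ¬((1 - δ) * (#{a | q a} / Fintype.card α) * m ≤ #{i | q (s i)} ∧
        #{i | q (s i)} ≤ (1 + δ) * (#{a | q a} / Fintype.card α) * m)} : ℝ) /
        Fintype.card (Fin m → α) ≤
      2 * exp (-(δ ^ 2 * (#{a | q a} / Fintype.card α * m) / 3)) := by
  set μ : ℝ := #{a | q a} / Fintype.card α * m
  have hexp : exp (-(δ ^ 2 * μ / 2)) ≤ exp (-(δ ^ 2 * μ / 3)) := by
    have : 0 ≤ δ ^ 2 * μ := by positivity
    exact exp_le_exp.2 (by linarith)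
  rw [div_le_iff₀ (by exact_mod_cast Fintype.card_pos), Fintype.card_fun, Fintype.card_fin,
    Nat.cast_pow]
  calc _ ≤ (#{s : Fin m → α | #{i | q (s i)} < (1 - δ) * (#{a | q a} / Fintype.card α) * m} : ℝ) +
        #{s : Fin m → α | (1 + δ) * (#{a | q a} / Fintype.card α) * m < #{i | q (s i)}} := by
        simp only [← not_le]
        exact_mod_cast card_filter_not_and_le _ _
    _ ≤ Fintype.card α ^ m * exp (-(δ ^ 2 * μ / 2)) +
        Fintype.card α ^ m * exp (-(δ ^ 2 * μ / 3)) :=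
        add_le_add (chernoff_card_lower_tail_le q m h0 h1)
          (chernoff_card_upper_tail_le q m h0 h1.le)
    _ ≤ Fintype.card α ^ m * exp (-(δ ^ 2 * μ / 3)) +
        Fintype.card α ^ m * exp (-(δ ^ 2 * μ / 3)) := by
        gcongr
    _ = _ := by ring

end Sampling

-- The instance for `∀ i, p i ω` is a separate argument so that these lemmas match the instance
-- a goal carries: for `ι = Fin k` that is `Nat.decidableForallFin`, not
-- `Fintype.decidableForallFintype`.
theorem card_le_card_filter_forall_add_sum {Ω ι : Type*} [Fintype Ω] [Fintype ι]
    (p : ι → Ω → Prop) [∀ i, DecidablePred (p i)] [DecidablePred fun ω => ∀ i, p i ω] :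
    Fintype.card Ω ≤ #{ω | ∀ i, p i ω} + ∑ i, #{ω | ¬p i ω} := by
  classical
  have hcover : (univ : Finset Ω) ⊆
      ({ω | ∀ i, p i ω} : Finset Ω) ∪ univ.biUnion fun i => {ω | ¬p i ω} := by
    intro ω _
    by_cases hω : ∀ i, p i ω
    · exact mem_union_left _ (mem_filter.2 ⟨mem_univ _, hω⟩)
    · push Not at hω
      obtain ⟨i, hi⟩ := hω
      exact mem_union_right _ (mem_biUnion.2 ⟨i, mem_univ _, mem_filter.2 ⟨mem_univ _, hi⟩⟩)
  calc Fintype.card Ω = #(univ : Finset Ω) := card_univ.symm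
    _ ≤ _ := card_le_card hcover
    _ ≤ _ := card_union_le _ _
    _ ≤ _ := add_le_add_right card_biUnion_le _

theorem one_sub_sum_le_card_filter_forall_div {Ω ι : Type*} [Fintype Ω] [Nonempty Ω] [Fintype ι]
    (p : ι → Ω → Prop) [∀ i, DecidablePred (p i)] [DecidablePred fun ω => ∀ i, p i ω]
    (ε : ι → ℝ) (h : ∀ i, (#{ω | ¬p i ω} : ℝ) / Fintype.card Ω ≤ ε i) :
    1 - ∑ i, ε i ≤ #{ω | ∀ i, p i ω} / Fintype.card Ω := by
  have hΩ : (0 : ℝ) < Fintype.card Ω := by exact_mod_cast Fintype.card_pos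
  have hunion : (Fintype.card Ω : ℝ) ≤ #{ω | ∀ i, p i ω} + ∑ i, (#{ω | ¬p i ω} : ℝ) := by
    exact_mod_cast card_le_card_filter_forall_add_sum p
  have hbad : ∑ i, (#{ω | ¬p i ω} : ℝ) ≤ (∑ i, ε i) * Fintype.card Ω := by
    rw [sum_mul]
    exact sum_le_sum fun i _ => (div_le_iff₀ hΩ).1 (h i)
  rw [le_div_iff₀ hΩ]
  linarith

theorem exp_neg_sq_mul_div_three_le_of_sample_size {k η δ ε p m : ℝ} (hk : 0 < k) (hη : 0 < η)
    (hδ : 0 < δ) (hε : 0 < ε) (hm : 0 ≤ m) (hp : ε / k ≤ p)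
    (hmlb : 3 * k / (δ ^ 2 * ε) * log (2 * k / η) ≤ m) :
    exp (-(δ ^ 2 * (p * m) / 3)) ≤ η / (2 * k) := by
  rw [div_mul_eq_mul_div, div_le_iff₀ (by positivity)] at hmlb
  have hlog : log (2 * k / η) ≤ δ ^ 2 * (ε / k * m) / 3 := by
    rw [show δ ^ 2 * (ε / k * m) / 3 = m * (δ ^ 2 * ε) / (3 * k) by field_simp,
      le_div_iff₀ (by positivity)]
    linarith
  calc exp (-(δ ^ 2 * (p * m) / 3)) ≤ exp (-log (2 * k / η)) := by
        gcongr
        exact hlog.trans (by gcongr)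
    _ = η / (2 * k) := by rw [exp_neg, exp_log (by positivity), inv_div]

theorem uniform_sample_cluster_count_concentration_general {D : ℕ} (k n : ℕ) (hk : 0 < k)
    (P Popt : Finset (EuclideanSpace ℝ (Fin D)))
    (hPcard : P.card = n) (hPopt : Popt ⊆ P)
    (C : Fin k → Finset (EuclideanSpace ℝ (Fin D)))
    (hCne : ∀ j, (C j).Nonempty)
    (hCsub : ∀ j, C j ⊆ Popt)
    (ε₁ : ℝ) (hε₁ : 0 < ε₁)
    (hsig : ∀ j, (ε₁ / k) * n ≤ ((C j).card : ℝ))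
    (η δ : ℝ) (hη0 : 0 < η) (hδ0 : 0 < δ) (hδ1 : δ < 1)
    (m : ℕ)
    (hmlb : ((3 * k : ℝ) / (δ ^ 2 * ε₁)) * Real.log (2 * k / η) ≤ (m : ℝ)) :
    1 - η ≤
      ((Finset.univ.filter fun s : Fin m → ↥P =>
          ∀ j : Fin k,
            (1 - δ) * (((C j).card : ℝ) / n) * m ≤
              ((Finset.univ.filter fun i : Fin m =>
                  (s i : EuclideanSpace ℝ (Fin D)) ∈ C j).card : ℝ) ∧
            ((Finset.univ.filter fun i : Fin m =>
                (s i : EuclideanSpace ℝ (Fin D)) ∈ C j).card : ℝ) ≤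
              (1 + δ) * (((C j).card : ℝ) / n) * m).card : ℝ)
        / (Fintype.card (Fin m → ↥P) : ℝ) := by
  obtain ⟨x, hx⟩ := hCne ⟨0, hk⟩
  have hxP : x ∈ P := hPopt (hCsub _ hx)
  have : Nonempty ↥P := ⟨⟨x, hxP⟩⟩
  have hn : (0 : ℝ) < n := by rw [← hPcard]; exact_mod_cast card_pos.2 ⟨x, hxP⟩
  have hsum : ∑ _j : Fin k, η / k = η := by
    rw [sum_const, card_univ, Fintype.card_fin, nsmul_eq_mul]; field_simp
  refine le_trans (by rw [hsum])
    (one_sub_sum_le_card_filter_forall_div _ (fun _ => η / k) fun j => ?_)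
  have hcheb := chernoff_card_not_mem_Icc_div_le
    (fun x : ↥P => (x : EuclideanSpace ℝ (Fin D)) ∈ C j) m hδ0.le hδ1
  rw [card_filter_coe_mem ((hCsub j).trans hPopt), Fintype.card_coe, hPcard] at hcheb
  have hdensity : ε₁ / k ≤ #(C j) / n := by rw [le_div_iff₀ hn]; exact hsig j
  calc _ ≤ _ := hcheb
    _ ≤ 2 * (η / (2 * k)) := by
      gcongr
      exact exp_neg_sq_mul_div_three_le_of_sample_size (by positivity) hη0 hδ0 hε₁ (by positivity)
        hdensity hmlb
    _ = η / k := by ring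

/-- For an `(ε₁,ε₂)`-significant instance, a uniform i.i.d. sample of size
`m ≥ (3k/(δ²ε₁))·log(2k/η)` satisfies, with probability at least `1 − η`, that for every
cluster `C*_j` the number of sample points in `C*_j` lies in `(1±δ)·(|C*_j|/n)·m`. -/
theorem uniform_sample_cluster_count_concentration {D : ℕ} (k n z : ℕ) (hk : 0 < k)
    (hz0 : 0 < z) (hzn : z < n)
    (P Popt : Finset (EuclideanSpace ℝ (Fin D)))
    (hPcard : P.card = n) (hPopt : Popt ⊆ P) (hPoptcard : Popt.card = n - z)
    (C : Fin k → Finset (EuclideanSpace ℝ (Fin D)))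
    (hCne : ∀ j, (C j).Nonempty)
    (hCsub : ∀ j, C j ⊆ Popt)
    (hCdisj : ∀ j j', j ≠ j' → Disjoint (C j) (C j'))
    (hCcover : ∀ p ∈ Popt, ∃ j, p ∈ C j)
    (ε₁ ε₂ : ℝ) (hε₁ : 0 < ε₁) (hε₂ : 0 < ε₂)
    (hsig : ∀ j, (ε₁ / k) * n ≤ ((C j).card : ℝ))
    (hzval : (z : ℝ) = (ε₂ / k) * n)
    (η δ : ℝ) (hη0 : 0 < η) (hη1 : η < 1) (hδ0 : 0 < δ) (hδ1 : δ < 1)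
    (m : ℕ) (hm : 0 < m)
    (hmlb : ((3 * k : ℝ) / (δ ^ 2 * ε₁)) * Real.log (2 * k / η) ≤ (m : ℝ)) :
    1 - η ≤
      ((Finset.univ.filter fun s : Fin m → ↥P =>
          ∀ j : Fin k,
            (1 - δ) * (((C j).card : ℝ) / n) * m ≤
              ((Finset.univ.filter fun i : Fin m =>
                  (s i : EuclideanSpace ℝ (Fin D)) ∈ C j).card : ℝ) ∧
            ((Finset.univ.filter fun i : Fin m =>
                (s i : EuclideanSpace ℝ (Fin D)) ∈ C j).card : ℝ) ≤
              (1 + δ) * (((C j).card : ℝ) / n) * m).card : ℝ)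
        / (Fintype.card (Fin m → ↥P) : ℝ) :=
  uniform_sample_cluster_count_concentration_general k n hk P Popt hPcard hPopt C hCne hCsub ε₁ hε₁
    hsig η δ hη0 hδ0 hδ1 m hmlb
end

section
/- Let P ⊆ ℝ^D be finite, let P_opt ⊆ P be partitioned into nonempty clusters C*_1,…,C*_k, and suppose each C*_j is contained in some Euclidean ball of radius r_opt ≥ 0. Let S ⊆ P satisfy S ∩ C*_j ≠ ∅ for every j ∈ {1,…,k}, and let H ⊆ ℝ^D be a nonempty finite set such that dist(q, H) ≤ 2·r_opt for every q ∈ S. Then dist(p, H) ≤ 4·r_opt for every p ∈ P_opt. -/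
section

variable {X : Type*} [PseudoMetricSpace X]

lemma dist_le_two_mul_of_dist_le {p q x : X} {r : ℝ} (hp : dist p x ≤ r) (hq : dist q x ≤ r) :
    dist p q ≤ 2 * r :=
  calc dist p q ≤ dist p x + dist q x := dist_triangle_right p q x
    _ ≤ 2 * r := by linarith

lemma Metric.infDist_le_of_dist_le_of_infDist_le {p q : X} {s : Set X} {a b : ℝ}
    (hpq : dist p q ≤ a) (hq : Metric.infDist q s ≤ b) : Metric.infDist p s ≤ a + b :=
  calc Metric.infDist p s ≤ Metric.infDist q s + dist p q := Metric.infDist_le_infDist_add_dist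
    _ ≤ a + b := by linarith

end

theorem kcenter_four_approx_core_general {D : ℕ} (k : ℕ)
    (Popt : Finset (EuclideanSpace ℝ (Fin D)))
    (C : Fin k → Finset (EuclideanSpace ℝ (Fin D)))
    (hCcover : ∀ p ∈ Popt, ∃ j, p ∈ C j)
    (ropt : ℝ)
    (hball : ∀ j, ∃ x : EuclideanSpace ℝ (Fin D), ∀ p ∈ C j, dist p x ≤ ropt)
    (S : Finset (EuclideanSpace ℝ (Fin D)))
    (hSC : ∀ j, (S ∩ C j).Nonempty)
    (H : Finset (EuclideanSpace ℝ (Fin D)))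
    (hHS : ∀ q ∈ S, Metric.infDist q (H : Set (EuclideanSpace ℝ (Fin D))) ≤ 2 * ropt) :
    ∀ p ∈ Popt, Metric.infDist p (H : Set (EuclideanSpace ℝ (Fin D))) ≤ 4 * ropt := by
  intro p hp
  obtain ⟨j, hpj⟩ := hCcover p hp
  obtain ⟨s, hs⟩ := hSC j
  obtain ⟨hsS, hsj⟩ := Finset.mem_inter.mp hs
  obtain ⟨x, hx⟩ := hball j
  have hps : dist p s ≤ 2 * ropt := dist_le_two_mul_of_dist_le (hx p hpj) (hx s hsj)
  calc Metric.infDist p (H : Set (EuclideanSpace ℝ (Fin D))) ≤ 2 * ropt + 2 * ropt :=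
        Metric.infDist_le_of_dist_le_of_infDist_le hps (hHS s hsS)
    _ = 4 * ropt := by ring

/-- If each optimal cluster is contained in a ball of radius `r_opt`, `S` hits
every cluster, and every point of `S` is within `2·r_opt` of the center set `H`, then every
point of `P_opt` is within `4·r_opt` of `H`. -/
theorem kcenter_four_approx_core {D : ℕ} (k : ℕ) (hk : 0 < k)
    (P Popt : Finset (EuclideanSpace ℝ (Fin D))) (hPopt : Popt ⊆ P)
    (C : Fin k → Finset (EuclideanSpace ℝ (Fin D)))
    (hCne : ∀ j, (C j).Nonempty)
    (hCsub : ∀ j, C j ⊆ Popt)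
    (hCdisj : ∀ j j', j ≠ j' → Disjoint (C j) (C j'))
    (hCcover : ∀ p ∈ Popt, ∃ j, p ∈ C j)
    (ropt : ℝ) (hropt : 0 ≤ ropt)
    (hball : ∀ j, ∃ x : EuclideanSpace ℝ (Fin D), ∀ p ∈ C j, dist p x ≤ ropt)
    (S : Finset (EuclideanSpace ℝ (Fin D))) (hS : S ⊆ P)
    (hSC : ∀ j, (S ∩ C j).Nonempty)
    (H : Finset (EuclideanSpace ℝ (Fin D))) (hH : H.Nonempty)
    (hHS : ∀ q ∈ S, Metric.infDist q (H : Set (EuclideanSpace ℝ (Fin D))) ≤ 2 * ropt) :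
    ∀ p ∈ Popt, Metric.infDist p (H : Set (EuclideanSpace ℝ (Fin D))) ≤ 4 * ropt :=
  kcenter_four_approx_core_general k Popt C hCcover ropt hball S hSC H hHS
end

section
/- Given an (ε₁,ε₂)-significant instance of k-center clustering with z outliers whose optimal clusters C*_1,…,C*_k are each contained in a Euclidean ball of radius r_opt, let η ∈ (0,1), let m be a positive integer with m ≥ (k/ε₁)·log(k/η), and let k' := ⌈(ε₂/(k·η))·m⌉. Draw an i.i.d. uniform sample s : {1,…,m} → P. Then with probability at least 1 − 2η the following holds: for every nonempty finite set H ⊆ ℝ^D with |H| = k + k' satisfying max_{1≤i≤m} dist(s_i, H) ≤ 2 · min{ max_{1≤i≤m} dist(s_i, K) : K ⊆ ℝ^D, |K| = k + k' } (i.e., H is a 2-approximate solution of (k+k')-center clustering on the sample), one has Δ^{-z}_∞(P, H) ≤ 4·r_opt. -/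
open scoped Classical
open Finset

/-!
Call a sample good if it meets every optimal cluster and contains at most `k'` outliers. On a
good sample, the `k` cluster centres together with the sampled outliers, padded with points of `H`
to exactly `k + k'` points, lie within `r_opt` of every sample point; so a 2-approximate `H` lies
within `2 r_opt` of every sample point and hence, through a sampled point of the same cluster,
within `4 r_opt` of every inlier. A uniform sample misses a cluster of density `ε₁/k` with
probability `(1 - ε₁/k)^m ≤ exp (-ε₁ m / k) ≤ η/k`, and since the expected number of sampled
outliers is `m z / n = ε₂ m / k ≤ η k'`, Markov's inequality bounds the probability of more than
`k'` outliers by `η`. A union bound gives `1 - 2η`.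
-/

section Geometry

open Metric

variable {α ι : Type*} [PseudoMetricSpace α]

lemma iSup_infDist_le_two_mul_of_approx {s : ι → α} {H K₀ : Finset α} {r : ℝ} (hr : 0 ≤ r)
    (hH : H.Nonempty) (hK₀ : #K₀ ≤ #H) (hcov : ∀ i, ∃ y ∈ K₀, dist (s i) y ≤ r)
    (happrox : ∀ K : Finset α, K.Nonempty → #K = #H →
      ⨆ i, infDist (s i) (H : Set α) ≤ 2 * ⨆ i, infDist (s i) (K : Set α)) :
    ⨆ i, infDist (s i) (H : Set α) ≤ 2 * r := by
  obtain ⟨K, hK₀K, -, hKcard⟩ :=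
    exists_subsuperset_card_eq subset_union_left hK₀ (card_le_card subset_union_right)
  have hK : ⨆ i, infDist (s i) (K : Set α) ≤ r := Real.iSup_le (fun i => by
    obtain ⟨y, hy, hsy⟩ := hcov i
    exact (infDist_le_dist_of_mem (mem_coe.2 (hK₀K hy))).trans hsy) hr
  have hKne : K.Nonempty := card_pos.1 (hKcard ▸ hH.card_pos)
  linarith [happrox K hKne hKcard]

variable [DecidableEq α] [Fintype ι] {κ : Type*} [Fintype κ]

lemma infDist_le_four_mul_of_hits_clusters {Popt : Finset α} {C : κ → Finset α} {x : κ → α}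
    {r : ℝ} (hr : 0 ≤ r) (hx : ∀ j, ∀ p ∈ C j, dist p (x j) ≤ r)
    (hcover : ∀ p ∈ Popt, ∃ j, p ∈ C j) {s : ι → α} (hhit : ∀ j, ∃ i, s i ∈ C j) {k' : ℕ}
    (hout : #{i | s i ∉ Popt} ≤ k') {H : Finset α} (hH : H.Nonempty)
    (hHcard : Fintype.card κ + k' ≤ #H)
    (happrox : ∀ K : Finset α, K.Nonempty → #K = #H →
      ⨆ i, infDist (s i) (H : Set α) ≤ 2 * ⨆ i, infDist (s i) (K : Set α)) :
    ∀ p ∈ Popt, infDist p (H : Set α) ≤ 4 * r := by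
  set K₀ := univ.image x ∪ (univ.filter fun i => s i ∉ Popt).image s
  have hK₀ : #K₀ ≤ #H := calc
    #K₀ ≤ Fintype.card κ + k' :=
      (card_union_le _ _).trans (add_le_add card_image_le (card_image_le.trans hout))
    _ ≤ #H := hHcard
  have hcov : ∀ i, ∃ y ∈ K₀, dist (s i) y ≤ r := by
    intro i
    by_cases hi : s i ∈ Popt
    · obtain ⟨j, hj⟩ := hcover _ hi
      exact ⟨x j, mem_union_left _ (mem_image_of_mem x (mem_univ j)), hx j _ hj⟩
    · refine ⟨s i, mem_union_right _ (mem_image_of_mem s (mem_filter.2 ⟨mem_univ i, hi⟩)), ?_⟩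
      rwa [dist_self]
  have hsample := iSup_infDist_le_two_mul_of_approx hr hH hK₀ hcov happrox
  intro p hp
  obtain ⟨j, hpj⟩ := hcover p hp
  obtain ⟨i, hij⟩ := hhit j
  calc infDist p (H : Set α) ≤ infDist (s i) (H : Set α) + dist p (s i) :=
        infDist_le_infDist_add_dist
    _ ≤ 2 * r + (r + r) := by
        gcongr
        · exact (le_ciSup (Set.finite_range _).bddAbove i).trans hsample
        · exact dist_triangle_right _ _ _ |>.trans (add_le_add (hx j p hpj) (hx j _ hij))
    _ = 4 * r := by ring

end Geometry

section Sampling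

variable {ι β : Type*} [Fintype ι] [DecidableEq ι] [Fintype β] [DecidableEq β]

lemma card_piFinset_compl_le (T : Finset β) {ε δ : ℝ} (hT : ε * Fintype.card β ≤ #T)
    (hδ : 0 < δ) (hι : Real.log δ⁻¹ ≤ ε * Fintype.card ι) :
    (#(Fintype.piFinset fun _ : ι => Tᶜ) : ℝ) ≤ δ * Fintype.card (ι → β) := by
  have hbase : (#Tᶜ : ℝ) ≤ Fintype.card β * Real.exp (-ε) := by
    have hcompl : (#Tᶜ : ℝ) = Fintype.card β - #T := by
      rw [← card_compl_add_card T]; push_cast; ring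
    rw [hcompl]
    nlinarith [Real.one_sub_le_exp_neg ε, (Nat.cast_nonneg _ : (0 : ℝ) ≤ Fintype.card β)]
  have hexp : Real.exp (-(ε * Fintype.card ι)) ≤ δ := calc
    Real.exp (-(ε * Fintype.card ι)) ≤ Real.exp (-Real.log δ⁻¹) := by gcongr
    _ = δ := by rw [Real.log_inv, neg_neg, Real.exp_log hδ]
  calc (#(Fintype.piFinset fun _ : ι => Tᶜ) : ℝ) = (#Tᶜ : ℝ) ^ Fintype.card ι := by
        rw [Fintype.card_piFinset, prod_const, card_univ, Nat.cast_pow]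
    _ ≤ (Fintype.card β * Real.exp (-ε)) ^ Fintype.card ι :=
        pow_le_pow_left₀ (Nat.cast_nonneg _) hbase _
    _ = Real.exp (-(ε * Fintype.card ι)) * Fintype.card (ι → β) := by
        rw [mul_pow, ← Real.exp_nat_mul, Fintype.card_fun, Nat.cast_pow]; ring_nf
    _ ≤ δ * Fintype.card (ι → β) := by gcongr

lemma card_filter_apply_eq (i : ι) (b : β) :
    #{s : ι → β | s i = b} = Fintype.card β ^ (Fintype.card ι - 1) := by
  simpa using Fintype.card_filter_piFinset_const_eq_of_mem (univ : Finset β) i (mem_univ b)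

lemma card_filter_apply_mem_mul_card (T : Finset β) (i : ι) :
    #{s : ι → β | s i ∈ T} * Fintype.card β = #T * Fintype.card β ^ Fintype.card ι := by
  have hfib : #{s : ι → β | s i ∈ T} = ∑ b ∈ T, #{s : ι → β | s i = b} := by
    refine (card_eq_sum_card_fiberwise (f := fun s : ι → β => s i)
      (fun s hs => (mem_filter.1 hs).2)).trans (sum_congr rfl ?_)
    refine fun b hb => congrArg card ?_
    ext s
    simp only [mem_filter, mem_univ, true_and, and_iff_right_iff_imp]
    rintro rfl; exact hb
  rw [hfib, sum_congr rfl fun b _ => card_filter_apply_eq i b, sum_const, smul_eq_mul, mul_assoc,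
    mul_comm _ (Fintype.card β), mul_pow_sub_one (Fintype.card_pos_iff.2 ⟨i⟩).ne']

lemma sum_card_filter_apply_mem_mul_card (T : Finset β) :
    (∑ s : ι → β, #{i | s i ∈ T}) * Fintype.card β =
      Fintype.card ι * #T * Fintype.card β ^ Fintype.card ι := by
  simp_rw [card_filter, sum_comm (s := (univ : Finset (ι → β))), ← card_filter, sum_mul,
    card_filter_apply_mem_mul_card, sum_const, card_univ, smul_eq_mul, mul_assoc]

lemma card_filter_lt_card_filter_apply_mem_mul_le (T : Finset β) (t : ℕ) :
    #{s : ι → β | t < #{i | s i ∈ T}} * (t + 1) * Fintype.card β ≤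
      Fintype.card ι * #T * Fintype.card β ^ Fintype.card ι := by
  rw [← sum_card_filter_apply_mem_mul_card]
  gcongr
  calc #{s : ι → β | t < #{i | s i ∈ T}} * (t + 1)
      ≤ ∑ s ∈ {s : ι → β | t < #{i | s i ∈ T}}, #{i | s i ∈ T} := by
        have h := card_nsmul_le_sum ({s : ι → β | t < #{i | s i ∈ T}} : Finset (ι → β))
          (fun s => #{i | s i ∈ T}) (t + 1) fun s hs => (mem_filter.1 hs).2
        rwa [smul_eq_mul] at h
    _ ≤ ∑ s : ι → β, #{i | s i ∈ T} := sum_le_sum_of_subset (filter_subset _ _)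

lemma card_filter_lt_card_filter_apply_mem_le (T : Finset β) (t : ℕ) {δ : ℝ}
    (hβ : 0 < Fintype.card β) (hT : Fintype.card ι * #T ≤ δ * (t + 1) * Fintype.card β) :
    (#{s : ι → β | t < #{i | s i ∈ T}} : ℝ) ≤ δ * Fintype.card (ι → β) := by
  have hmarkov : (#{s : ι → β | t < #{i | s i ∈ T}} : ℝ) * ((t + 1) * Fintype.card β) ≤
      Fintype.card ι * #T * Fintype.card (ι → β) := by
    rw [Fintype.card_fun, ← mul_assoc]
    exact_mod_cast card_filter_lt_card_filter_apply_mem_mul_le T t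
  refine le_of_mul_le_mul_right (hmarkov.trans ?_) (by positivity)
  calc (Fintype.card ι * #T * Fintype.card (ι → β) : ℝ)
      ≤ δ * (t + 1) * Fintype.card β * Fintype.card (ι → β) := by gcongr
    _ = δ * Fintype.card (ι → β) * ((t + 1) * Fintype.card β) := by ring

lemma one_sub_le_card_filter_div_card {κ : Type*} [Fintype κ] (Q : β → Prop)
    (A : κ → Finset β) (B : Finset β) {a b : ℝ} (hβ : 0 < Fintype.card β)
    (hA : ∀ j, (#(A j) : ℝ) ≤ a * Fintype.card β) (hB : (#B : ℝ) ≤ b * Fintype.card β)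
    (hQ : ∀ x, (∀ j, x ∉ A j) → x ∉ B → Q x) :
    1 - (Fintype.card κ * a + b) ≤ (#{x | Q x} : ℝ) / Fintype.card β := by
  have hcover : (univ : Finset β) ⊆ ({x | Q x} : Finset β) ∪ (univ.biUnion A ∪ B) := by
    intro x _
    by_contra h
    simp only [mem_union, mem_filter, mem_univ, true_and, mem_biUnion, not_or, not_exists] at h
    exact h.1 (hQ x h.2.1 h.2.2)
  have hcard : Fintype.card β ≤ #{x | Q x} + (∑ j, #(A j) + #B) := calc
    Fintype.card β ≤ #(({x | Q x} : Finset β) ∪ (univ.biUnion A ∪ B)) := card_le_card hcover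
    _ ≤ #{x | Q x} + (#(univ.biUnion A) + #B) :=
        (card_union_le _ _).trans (Nat.add_le_add_left (card_union_le _ _) _)
    _ ≤ #{x | Q x} + (∑ j, #(A j) + #B) := by gcongr; exact card_biUnion_le
  have hsum : ∑ j, (#(A j) : ℝ) ≤ Fintype.card κ * a * Fintype.card β := calc
    ∑ j, (#(A j) : ℝ) ≤ ∑ _j : κ, a * Fintype.card β := sum_le_sum fun j _ => hA j
    _ = Fintype.card κ * a * Fintype.card β := by rw [sum_const, card_univ, nsmul_eq_mul]; ring
  rw [le_div_iff₀ (by exact_mod_cast hβ)]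
  have : (Fintype.card β : ℝ) ≤ #{x | Q x} + (∑ j, (#(A j) : ℝ) + #B) := by exact_mod_cast hcard
  linarith

lemma one_sub_two_mul_le_card_filter_div {κ : Type*} [Fintype κ] [Nonempty κ]
    (T : κ → Finset β) (O : Finset β) {ε₁ ε₂ η : ℝ} {k' : ℕ} (hε₁ : 0 < ε₁) (hη : 0 < η)
    (hβ : 0 < Fintype.card β) (hT : ∀ j, ε₁ / Fintype.card κ * Fintype.card β ≤ #(T j))
    (hO : (#O : ℝ) ≤ ε₂ / Fintype.card κ * Fintype.card β)
    (hι : Fintype.card κ / ε₁ * Real.log (Fintype.card κ / η) ≤ Fintype.card ι)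
    (hk' : ε₂ / (Fintype.card κ * η) * Fintype.card ι ≤ k') (Q : (ι → β) → Prop)
    (hQ : ∀ s, (∀ j, ∃ i, s i ∈ T j) → #{i | s i ∈ O} ≤ k' → Q s) :
    1 - 2 * η ≤ (#{s | Q s} : ℝ) / Fintype.card (ι → β) := by
  have hκ : (0 : ℝ) < Fintype.card κ := by exact_mod_cast Fintype.card_pos
  have hmiss : ∀ j, (#(Fintype.piFinset fun _ : ι => (T j)ᶜ) : ℝ) ≤
      η / Fintype.card κ * Fintype.card (ι → β) := fun j =>
    card_piFinset_compl_le (T j) (hT j) (by positivity) (by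
      rwa [inv_div, ← div_le_iff₀' (by positivity), div_eq_inv_mul, inv_div])
  have hmany : (#{s : ι → β | k' < #{i | s i ∈ O}} : ℝ) ≤ η * Fintype.card (ι → β) := by
    refine card_filter_lt_card_filter_apply_mem_le O k' hβ ?_
    calc (Fintype.card ι * #O : ℝ) ≤ Fintype.card ι * (ε₂ / Fintype.card κ * Fintype.card β) := by
          gcongr
      _ = ε₂ / (Fintype.card κ * η) * Fintype.card ι * (η * Fintype.card β) := by field_simp
      _ ≤ k' * (η * Fintype.card β) := by gcongr
      _ ≤ η * (k' + 1) * Fintype.card β := by nlinarith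
  have hpos : 0 < Fintype.card (ι → β) := by rw [Fintype.card_fun]; positivity
  have := one_sub_le_card_filter_div_card Q _ _ hpos hmiss hmany fun s hhit hout =>
    hQ s (by simpa [Fintype.mem_piFinset] using hhit) (by simpa using hout)
  rwa [mul_div_cancel₀ _ hκ.ne', ← two_mul] at this

end Sampling

theorem uniform_sampling_kcenter_outliers_I_general {D : ℕ} (k n z : ℕ) (hk : 0 < k)
    (hzn : z < n)
    (P Popt : Finset (EuclideanSpace ℝ (Fin D)))
    (hPcard : P.card = n) (hPopt : Popt ⊆ P) (hPoptcard : Popt.card = n - z)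
    (C : Fin k → Finset (EuclideanSpace ℝ (Fin D)))
    (hCsub : ∀ j, C j ⊆ Popt)
    (hCcover : ∀ p ∈ Popt, ∃ j, p ∈ C j)
    (ropt : ℝ) (hropt : 0 ≤ ropt)
    (hball : ∀ j, ∃ x : EuclideanSpace ℝ (Fin D), ∀ p ∈ C j, dist p x ≤ ropt)
    (ε₁ ε₂ : ℝ) (hε₁ : 0 < ε₁)
    (hsig : ∀ j, (ε₁ / k) * n ≤ ((C j).card : ℝ))
    (hzval : (z : ℝ) = (ε₂ / k) * n)
    (η : ℝ) (hη0 : 0 < η)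
    (m : ℕ) (hmlb : ((k : ℝ) / ε₁) * Real.log (k / η) ≤ (m : ℝ))
    (k' : ℕ) (hk' : k' = ⌈ε₂ / (k * η) * m⌉₊) :
    1 - 2 * η ≤
      ((Finset.univ.filter fun s : Fin m → ↥P =>
          ∀ H : Finset (EuclideanSpace ℝ (Fin D)), H.Nonempty → H.card = k + k' →
            (∀ K : Finset (EuclideanSpace ℝ (Fin D)), K.Nonempty → K.card = k + k' →
              (⨆ i : Fin m, Metric.infDist (s i : EuclideanSpace ℝ (Fin D))
                  (H : Set (EuclideanSpace ℝ (Fin D)))) ≤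
                2 * ⨆ i : Fin m, Metric.infDist (s i : EuclideanSpace ℝ (Fin D))
                  (K : Set (EuclideanSpace ℝ (Fin D)))) →
            ∃ P' ⊆ P, P'.card = n - z ∧
              ∀ p ∈ P', Metric.infDist p (H : Set (EuclideanSpace ℝ (Fin D))) ≤
                4 * ropt).card : ℝ)
        / (Fintype.card (Fin m → ↥P) : ℝ) := by
  choose x hx using hball
  have : Nonempty (Fin k) := ⟨⟨0, hk⟩⟩
  have hcardP : Fintype.card P = n := by rw [Fintype.card_coe, hPcard]
  refine one_sub_two_mul_le_card_filter_div (fun j => (C j).subtype (· ∈ P))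
    (Popt.subtype (· ∈ P))ᶜ (ε₂ := ε₂) (k' := k') hε₁ hη0 (by omega) (fun j => ?_) ?_
    (by simpa using hmlb) (by simpa [hk'] using Nat.le_ceil (ε₂ / (k * η) * m)) _
    fun s hhit hout H hH hHcard happrox => ⟨Popt, hPopt, hPoptcard, ?_⟩
  · rw [card_subtype, filter_true_of_mem fun p hp => hPopt (hCsub j hp)]
    simpa [hcardP] using hsig j
  · have hz : #(Popt.subtype (· ∈ P))ᶜ ≤ z := by
      rw [card_compl, card_subtype, filter_true_of_mem hPopt, hPoptcard, hcardP]
      omega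
    simpa [hcardP, ← hzval] using hz
  · have hhit' : ∀ j, ∃ i, (s i : EuclideanSpace ℝ (Fin D)) ∈ C j := by simpa using hhit
    have hout' : #{i | (s i : EuclideanSpace ℝ (Fin D)) ∉ Popt} ≤ k' := by simpa using hout
    exact infDist_le_four_mul_of_hits_clusters hropt hx hCcover hhit' hout' hH (by simp [hHcard])
      fun K hK hKcard => happrox K hK (hKcard.trans hHcard)

/-- Uniform sampling for k-center clustering with outliers (Algorithm I /
Theorem 1). For an `(ε₁,ε₂)`-significant instance with optimal radius `r_opt`, sample size
`m ≥ (k/ε₁)·log(k/η)`, and `k' = ⌈(ε₂/(kη))·m⌉`: with probability at least `1 − 2η`, every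
2-approximate `(k+k')`-center solution `H` on the sample satisfies `Δ^{-z}_∞(P,H) ≤ 4·r_opt`. -/
theorem uniform_sampling_kcenter_outliers_I {D : ℕ} (k n z : ℕ) (hk : 0 < k)
    (hz0 : 0 < z) (hzn : z < n)
    (P Popt : Finset (EuclideanSpace ℝ (Fin D)))
    (hPcard : P.card = n) (hPopt : Popt ⊆ P) (hPoptcard : Popt.card = n - z)
    (C : Fin k → Finset (EuclideanSpace ℝ (Fin D)))
    (hCne : ∀ j, (C j).Nonempty)
    (hCsub : ∀ j, C j ⊆ Popt)
    (hCdisj : ∀ j j', j ≠ j' → Disjoint (C j) (C j'))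
    (hCcover : ∀ p ∈ Popt, ∃ j, p ∈ C j)
    (ropt : ℝ) (hropt : 0 ≤ ropt)
    (hball : ∀ j, ∃ x : EuclideanSpace ℝ (Fin D), ∀ p ∈ C j, dist p x ≤ ropt)
    (ε₁ ε₂ : ℝ) (hε₁ : 0 < ε₁) (hε₂ : 0 < ε₂)
    (hsig : ∀ j, (ε₁ / k) * n ≤ ((C j).card : ℝ))
    (hzval : (z : ℝ) = (ε₂ / k) * n)
    (η : ℝ) (hη0 : 0 < η) (hη1 : η < 1)
    (m : ℕ) (hm : 0 < m) (hmlb : ((k : ℝ) / ε₁) * Real.log (k / η) ≤ (m : ℝ))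
    (k' : ℕ) (hk' : k' = ⌈ε₂ / (k * η) * m⌉₊) :
    1 - 2 * η ≤
      ((Finset.univ.filter fun s : Fin m → ↥P =>
          ∀ H : Finset (EuclideanSpace ℝ (Fin D)), H.Nonempty → H.card = k + k' →
            (∀ K : Finset (EuclideanSpace ℝ (Fin D)), K.Nonempty → K.card = k + k' →
              (⨆ i : Fin m, Metric.infDist (s i : EuclideanSpace ℝ (Fin D))
                  (H : Set (EuclideanSpace ℝ (Fin D)))) ≤
                2 * ⨆ i : Fin m, Metric.infDist (s i : EuclideanSpace ℝ (Fin D))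
                  (K : Set (EuclideanSpace ℝ (Fin D)))) →
            ∃ P' ⊆ P, P'.card = n - z ∧
              ∀ p ∈ P', Metric.infDist p (H : Set (EuclideanSpace ℝ (Fin D))) ≤
                4 * ropt).card : ℝ)
        / (Fintype.card (Fin m → ↥P) : ℝ) :=
  uniform_sampling_kcenter_outliers_I_general k n z hk hzn P Popt hPcard hPopt hPoptcard C hCsub
    hCcover ropt hropt hball ε₁ ε₂ hε₁ hsig hzval η hη0 m hmlb k' hk'
end

section
/- Let P ⊆ ℝ^D be finite, let P_opt ⊆ P be partitioned into nonempty clusters C*_1,…,C*_k, and suppose each C*_j is contained in some Euclidean ball of radius r_opt ≥ 0. Let S ⊆ P be finite, let z' be a natural number with |S ∩ C*_j| > z' for every j, let c ≥ 1, and suppose H ⊆ ℝ^D is a nonempty finite set for which there exist r ∈ [0, c·r_opt] and S' ⊆ S with |S'| = |S| − z' such that dist(q, H) ≤ r for every q ∈ S'. Then dist(p, H) ≤ (c+2)·r_opt for every p ∈ P_opt. -/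
/-!
`S'` misses only `z'` points of `S`, while every cluster holds more than `z'` points of `S`;
so each cluster contains a point `q ∈ S'`, within `r` of `H`.
Any `p` in the same cluster lies within `2·r_opt` of `q`, hence within `r + 2·r_opt` of `H`.
-/

open scoped Classical
open Finset Metric

theorem Finset.inter_nonempty_of_card_sdiff_lt {α : Type*} [DecidableEq α] {S S' A : Finset α}
    (h : #(S \ S') < #(S ∩ A)) : (S' ∩ A).Nonempty := by
  by_contra hempty
  refine h.not_ge (card_le_card fun x hx => ?_)
  obtain ⟨hxS, hxA⟩ := mem_inter.mp hx
  exact mem_sdiff.mpr ⟨hxS, fun hxS' => hempty ⟨x, mem_inter.mpr ⟨hxS', hxA⟩⟩⟩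

theorem Metric.infDist_le_of_mem_closedBall {α : Type*} [PseudoMetricSpace α] {s : Set α}
    {p q x : α} {R r : ℝ} (hp : p ∈ closedBall x R) (hq : q ∈ closedBall x R)
    (hqs : infDist q s ≤ r) : infDist p s ≤ r + 2 * R :=
  calc infDist p s ≤ infDist q s + dist p q := infDist_le_infDist_add_dist
    _ ≤ r + (R + R) := add_le_add hqs ((dist_triangle_right p q x).trans (add_le_add hp hq))
    _ = r + 2 * R := by ring

theorem kcenter_c_plus_two_approx_core_general {D : ℕ} (k : ℕ)
    (Popt : Finset (EuclideanSpace ℝ (Fin D)))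
    (C : Fin k → Finset (EuclideanSpace ℝ (Fin D)))
    (hCcover : ∀ p ∈ Popt, ∃ j, p ∈ C j)
    (ropt : ℝ)
    (hball : ∀ j, ∃ x : EuclideanSpace ℝ (Fin D), ∀ p ∈ C j, dist p x ≤ ropt)
    (S : Finset (EuclideanSpace ℝ (Fin D)))
    (z' : ℕ) (hSC : ∀ j, z' < (S ∩ C j).card)
    (c : ℝ)
    (H : Finset (EuclideanSpace ℝ (Fin D)))
    (r : ℝ) (hrc : r ≤ c * ropt)
    (S' : Finset (EuclideanSpace ℝ (Fin D))) (hS' : S' ⊆ S)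
    (hS'card : S'.card = S.card - z')
    (hHS' : ∀ q ∈ S', Metric.infDist q (H : Set (EuclideanSpace ℝ (Fin D))) ≤ r) :
    ∀ p ∈ Popt, Metric.infDist p (H : Set (EuclideanSpace ℝ (Fin D))) ≤ (c + 2) * ropt := by
  intro p hp
  obtain ⟨j, hpj⟩ := hCcover p hp
  obtain ⟨x, hx⟩ := hball j
  have hdropped : #(S \ S') = z' := by
    have := (hSC j).trans_le (card_le_card inter_subset_left)
    rw [card_sdiff_of_subset hS', hS'card]
    omega
  obtain ⟨q, hq⟩ := inter_nonempty_of_card_sdiff_lt (A := C j) (hdropped ▸ hSC j)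
  obtain ⟨hqS', hqC⟩ := mem_inter.mp hq
  calc infDist p H ≤ r + 2 * ropt :=
        infDist_le_of_mem_closedBall (hx p hpj) (hx q hqC) (hHS' q hqS')
    _ ≤ (c + 2) * ropt := by linarith

/-- If each optimal cluster is contained in a ball of radius `r_opt`, the sample
`S` contains more than `z'` points from every cluster, and `H` covers some subset
`S' ⊆ S` of size `|S| − z'` within radius `r ≤ c·r_opt`, then every point of `P_opt` is
within `(c+2)·r_opt` of `H`. -/
theorem kcenter_c_plus_two_approx_core {D : ℕ} (k : ℕ) (hk : 0 < k)
    (P Popt : Finset (EuclideanSpace ℝ (Fin D))) (hPopt : Popt ⊆ P)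
    (C : Fin k → Finset (EuclideanSpace ℝ (Fin D)))
    (hCne : ∀ j, (C j).Nonempty)
    (hCsub : ∀ j, C j ⊆ Popt)
    (hCdisj : ∀ j j', j ≠ j' → Disjoint (C j) (C j'))
    (hCcover : ∀ p ∈ Popt, ∃ j, p ∈ C j)
    (ropt : ℝ) (hropt : 0 ≤ ropt)
    (hball : ∀ j, ∃ x : EuclideanSpace ℝ (Fin D), ∀ p ∈ C j, dist p x ≤ ropt)
    (S : Finset (EuclideanSpace ℝ (Fin D))) (hS : S ⊆ P)
    (z' : ℕ) (hSC : ∀ j, z' < (S ∩ C j).card)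
    (c : ℝ) (hc : 1 ≤ c)
    (H : Finset (EuclideanSpace ℝ (Fin D))) (hH : H.Nonempty)
    (r : ℝ) (hr0 : 0 ≤ r) (hrc : r ≤ c * ropt)
    (S' : Finset (EuclideanSpace ℝ (Fin D))) (hS' : S' ⊆ S)
    (hS'card : S'.card = S.card - z')
    (hHS' : ∀ q ∈ S', Metric.infDist q (H : Set (EuclideanSpace ℝ (Fin D))) ≤ r) :
    ∀ p ∈ Popt, Metric.infDist p (H : Set (EuclideanSpace ℝ (Fin D))) ≤ (c + 2) * ropt :=
  kcenter_c_plus_two_approx_core_general k Popt C hCcover ropt hball S z' hSC c H r hrc S' hS'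
    hS'card hHS'
end

section
/- Given an (ε₁,ε₂)-significant instance of k-center clustering with z outliers whose optimal clusters C*_1,…,C*_k are each contained in a Euclidean ball of radius r_opt, let η, δ ∈ (0,1) with ε₁/ε₂ > 1/(η(1−δ)), let m be a positive integer with m ≥ (3k/(δ²ε₁))·log(2k/η), and let z' be a natural number with (ε₂/(k·η))·m ≤ z' < (1−δ)·(ε₁/k)·m. Draw an i.i.d. uniform sample s : {1,…,m} → P. Then with probability at least 1 − 2η the following holds: for every c ≥ 1 and every nonempty finite H ⊆ ℝ^D with |H| = k satisfying min_{I⊆{1,…,m}, |I|=m−z'} max_{i∈I} dist(s_i, H) ≤ c · min{ min_{I⊆{1,…,m}, |I|=m−z'} max_{i∈I} dist(s_i, K) : K ⊆ ℝ^D, |K| = k } (i.e., H is a c-approximate solution of k-center clustering with z' outliers on the sample), one has Δ^{-z}_∞(P, H) ≤ (c+2)·r_opt. -/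
/-!
Call a sample good if at most `z'` of its points lie outside `P_opt` and more than `z'` of them
lie in every optimal cluster. On a good sample the optimal centres cover all but `z'` sample
points within `r_opt`, so a `c`-approximate `H` covers some `m − z'` sample points within
`c · r_opt`; these cannot miss a whole cluster, and every point of that cluster is within
`2 · r_opt` of the sample point it contains. The number of sampled outliers has mean
`m z / n ≤ η z'`, so Markov's inequality bounds the first failure by `η`; the number of hits of a
cluster is binomial with mean at least `ε₁ m / k`, and the Chernoff lower tail
`exp (-ε₁ δ² m / (2k)) ≤ η / (2k)` with a union bound over the `k` clusters bounds the second
failure by `η / 2`.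
-/

open scoped Classical
open Finset

/-- The optimal `(m − z')`-point covering radius of the sample `s` with respect to the center
set `T`: the minimum over all index sets `I` of size `m − z'` of the maximum distance from a
sample point indexed by `I` to `T`. -/
noncomputable def outlierRadius {D : ℕ} (m z' : ℕ) (s : Fin m → EuclideanSpace ℝ (Fin D))
    (T : Finset (EuclideanSpace ℝ (Fin D))) : ℝ :=
  sInf { r : ℝ | ∃ I : Finset (Fin m), I.card = m - z' ∧
    r = ⨆ i : ↥I, Metric.infDist (s i.1) (T : Set (EuclideanSpace ℝ (Fin D))) }

theorem exp_neg_le_one_sub_add_sq_div_two {x : ℝ} (hx : 0 ≤ x) :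
    Real.exp (-x) ≤ 1 - x + x ^ 2 / 2 := by
  have hinv : Real.exp (-x) * Real.exp x = 1 := by rw [← Real.exp_add]; simp
  nlinarith [Real.quadratic_le_exp_of_nonneg hx, Real.exp_pos (-x), sq_nonneg x]

theorem card_filter_mul_le_sum {Ω : Type*} [Fintype Ω] (P : Ω → Prop) [DecidablePred P]
    (f : Ω → ℝ) (hf : ∀ ω, 0 ≤ f ω) {a : ℝ} (h : ∀ ω, P ω → a ≤ f ω) :
    #{ω | P ω} * a ≤ ∑ ω, f ω := by
  calc #{ω | P ω} * a ≤ ∑ ω with P ω, f ω := by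
        simpa using card_nsmul_le_sum _ f a fun ω hω => h ω (mem_filter.1 hω).2
    _ ≤ ∑ ω, f ω := sum_le_sum_of_subset_of_nonneg (filter_subset _ _) fun ω _ _ => hf ω

theorem one_sub_le_card_filter_div_card_s8 {Ω : Type*} [Fintype Ω] [Nonempty Ω] (G : Ω → Prop)
    [DecidablePred G] {β : ℝ} (h : #{ω | ¬G ω} ≤ β * Fintype.card Ω) :
    1 - β ≤ #{ω | G ω} / Fintype.card Ω := by
  have hsplit : (#{ω | G ω} : ℝ) + #{ω | ¬G ω} = Fintype.card Ω := by
    exact_mod_cast card_filter_add_card_filter_not G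
  rw [le_div_iff₀ (by exact_mod_cast Fintype.card_pos)]
  linarith

theorem card_filter_not_le_card_filter_add_sum {Ω ι : Type*} [Fintype Ω] [Fintype ι]
    (G A : Ω → Prop) (B : ι → Ω → Prop) [DecidablePred G] [DecidablePred A]
    [∀ j, DecidablePred (B j)] (h : ∀ ω, ¬A ω → (∀ j, ¬B j ω) → G ω) :
    (#{ω | ¬G ω} : ℝ) ≤ #{ω | A ω} + ∑ j, (#{ω | B j ω} : ℝ) := by
  have hsub : ({ω | ¬G ω} : Finset Ω) ⊆
      ({ω | A ω} : Finset Ω) ∪ univ.biUnion fun j => ({ω | B j ω} : Finset Ω) := by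
    intro ω hω
    by_contra hbad
    simp only [mem_union, mem_biUnion, mem_filter, mem_univ, true_and, not_or, not_exists]
      at hω hbad
    exact hω (h ω hbad.1 hbad.2)
  exact_mod_cast (card_le_card hsub).trans
    ((card_union_le _ _).trans (Nat.add_le_add_left card_biUnion_le _))

section Sampling

variable {ι α : Type*} [Fintype ι] [DecidableEq ι] [Fintype α] (p : α → Prop) [DecidablePred p]

theorem card_filter_apply (i : ι) :
    #{s : ι → α | p (s i)} = #{x | p x} * Fintype.card α ^ (Fintype.card ι - 1) := by
  have : ({s : ι → α | p (s i)} : Finset (ι → α)) =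
      Fintype.piFinset (Function.update (fun _ => univ) i (univ.filter p)) := by
    ext s
    simp only [mem_filter, mem_univ, true_and, Fintype.mem_piFinset]
    refine ⟨fun hs j => ?_, fun hs => by simpa using hs i⟩
    obtain rfl | hji := eq_or_ne j i <;> simp [*]
  rw [this, Fintype.card_piFinset]
  simp only [Function.apply_update (fun _ => Finset.card)]
  rw [prod_update_of_mem (mem_univ i), prod_const, card_univ, card_sdiff_of_subset (by simp),
    card_singleton, card_univ]

theorem sum_card_filter_apply :
    ∑ s : ι → α, (#{i | p (s i)} : ℝ) =
      Fintype.card ι * (#{x | p x} / Fintype.card α) * Fintype.card α ^ Fintype.card ι := by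
  have hcount : ∀ s : ι → α, (#{i | p (s i)} : ℝ) = ∑ i, if p (s i) then 1 else 0 := by
    intro s; simp [sum_boole]
  simp_rw [hcount]
  rw [sum_comm]
  simp only [sum_boole, card_filter_apply, Nat.cast_mul, Nat.cast_pow, sum_const, card_univ,
    nsmul_eq_mul]
  rcases Nat.eq_zero_or_pos (Fintype.card ι) with hι | hι
  · simp [hι]
  rcases Nat.eq_zero_or_pos (Fintype.card α) with hα | hα
  · simp [Fintype.card_eq_zero_iff.1 hα]
  have hα' : (Fintype.card α : ℝ) ≠ 0 := by positivity
  rw [← Nat.sub_add_cancel hι, pow_succ]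
  field_simp
  simp

theorem sum_pow_card_filter_apply (r : ℝ) :
    ∑ s : ι → α, r ^ #{i | p (s i)} = (#{x | p x} * r + #{x | ¬p x}) ^ Fintype.card ι := by
  have hprod : ∀ s : ι → α, r ^ #{i | p (s i)} = ∏ i, if p (s i) then r else 1 := by
    intro s; rw [prod_ite, prod_const, prod_const_one, mul_one]
  have hsum : ∑ x, (if p x then r else 1) = #{x | p x} * r + #{x | ¬p x} := by
    rw [sum_ite, sum_const, sum_const, nsmul_eq_mul, nsmul_one]
  simp_rw [hprod]
  rw [← hsum, ← Fintype.prod_sum (fun _ x => if p x then r else 1), prod_const, card_univ]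

theorem card_lt_card_filter_apply_mul_le (t : ℕ) :
    #{s : ι → α | t < #{i | p (s i)}} * ((t : ℝ) + 1) ≤
      Fintype.card ι * (#{x | p x} / Fintype.card α) * Fintype.card α ^ Fintype.card ι := by
  rw [← sum_card_filter_apply]
  refine card_filter_mul_le_sum _ _ (fun _ => by positivity) fun s hs => ?_
  exact_mod_cast hs

theorem card_card_filter_apply_le_le_exp_mul {δ ε : ℝ} (hδ : 0 ≤ δ) (hε : 0 ≤ ε)
    (hp : ε * Fintype.card α ≤ #{x | p x}) {t : ℕ} (ht : t ≤ (1 - δ) * ε * Fintype.card ι) :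
    #{s : ι → α | #{i | p (s i)} ≤ t} ≤
      Real.exp (-(ε * δ ^ 2 * Fintype.card ι / 2)) * Fintype.card α ^ Fintype.card ι := by
  set N : ℝ := (Fintype.card α : ℝ)
  set a : ℝ := (#{x | p x} : ℝ)
  have hsplit : a + #{x | ¬p x} = N := by
    simp only [a, N]; exact_mod_cast card_filter_add_card_filter_not p
  have hbase : a * Real.exp (-δ) + #{x | ¬p x} ≤ N * Real.exp (-(ε * (δ - δ ^ 2 / 2))) := by
    have hgap : δ - δ ^ 2 / 2 ≤ 1 - Real.exp (-δ) := by
      linarith [exp_neg_le_one_sub_add_sq_div_two hδ]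
    have hN : 0 ≤ N := by positivity
    calc a * Real.exp (-δ) + #{x | ¬p x} = N - a * (1 - Real.exp (-δ)) := by linarith
      _ ≤ N * (1 - ε * (δ - δ ^ 2 / 2)) := by
        nlinarith [mul_le_mul_of_nonneg_left hgap (mul_nonneg hε hN),
          Real.exp_le_one_iff.2 (neg_nonpos.2 hδ)]
      _ ≤ N * Real.exp (-(ε * (δ - δ ^ 2 / 2))) :=
        mul_le_mul_of_nonneg_left (Real.one_sub_le_exp_neg _) hN
  -- Markov's inequality for `exp (δ (t - #{i | p (s i)}))`, which is `≥ 1` on the event.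
  rw [← mul_one (#{s : ι → α | #{i | p (s i)} ≤ t} : ℝ)]
  calc (#{s : ι → α | #{i | p (s i)} ≤ t} : ℝ) * 1
      ≤ ∑ s : ι → α, Real.exp (δ * t) * Real.exp (-δ) ^ #{i | p (s i)} := by
        refine card_filter_mul_le_sum _ _ (fun _ => by positivity) fun s hs => ?_
        rw [← Real.exp_nat_mul, ← Real.exp_add, Real.one_le_exp_iff]
        have : (#{i | p (s i)} : ℝ) ≤ t := by exact_mod_cast hs
        nlinarith
    _ = Real.exp (δ * t) * (a * Real.exp (-δ) + #{x | ¬p x}) ^ Fintype.card ι := by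
        rw [← mul_sum, sum_pow_card_filter_apply]
    _ ≤ Real.exp (δ * t) * (N * Real.exp (-(ε * (δ - δ ^ 2 / 2)))) ^ Fintype.card ι := by
        gcongr
    _ = Real.exp (δ * t - ε * (δ - δ ^ 2 / 2) * Fintype.card ι) * N ^ Fintype.card ι := by
        rw [sub_eq_add_neg (δ * t), Real.exp_add, mul_pow, ← Real.exp_nat_mul]
        ring_nf
    _ ≤ Real.exp (-(ε * δ ^ 2 * Fintype.card ι / 2)) * N ^ Fintype.card ι := by
        gcongr
        nlinarith [mul_le_mul_of_nonneg_left ht hδ]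

end Sampling

theorem card_filter_subtype_univ {α : Type*} (P : Finset α) (q : α → Prop) [DecidablePred q] :
    #{x : ↥P | q x} = #{x ∈ P | q x} := by
  rw [← card_map (Function.Embedding.subtype _)]
  congr 1
  ext
  simp [and_comm]

theorem card_sample_lt_card_filter_not_mem_le {α : Type*} [DecidableEq α] {P Q : Finset α}
    (hQ : Q ⊆ P) {m t : ℕ} {η : ℝ} (h : m * ((#P - #Q) / #P) ≤ η * (t + 1)) :
    (#{s : Fin m → ↥P | t < #{i | (s i : α) ∉ Q}} : ℝ) ≤ η * #P ^ m := by
  have hcount : (#{x : ↥P | (x : α) ∉ Q} : ℝ) = #P - #Q := by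
    rw [card_filter_subtype_univ P (· ∉ Q), filter_not, filter_mem_eq_inter,
      inter_eq_right.2 hQ, card_sdiff_of_subset hQ, Nat.cast_sub (card_le_card hQ)]
  have := card_lt_card_filter_apply_mul_le (ι := Fin m) (fun x : ↥P => (x : α) ∉ Q) t
  rw [hcount, Fintype.card_coe, Fintype.card_fin] at this
  have ht : (0 : ℝ) < t + 1 := by positivity
  nlinarith [pow_nonneg (Nat.cast_nonneg (α := ℝ) #P) m]

theorem card_sample_card_filter_mem_le_le {α : Type*} [DecidableEq α] {P C : Finset α}
    (hC : C ⊆ P) {m t : ℕ} {δ ε : ℝ} (hδ : 0 ≤ δ) (hε : 0 ≤ ε) (hCcard : ε * #P ≤ #C)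
    (ht : t ≤ (1 - δ) * ε * m) :
    (#{s : Fin m → ↥P | #{i | (s i : α) ∈ C} ≤ t} : ℝ) ≤
      Real.exp (-(ε * δ ^ 2 * m / 2)) * #P ^ m := by
  have hcount : #{x : ↥P | (x : α) ∈ C} = #C := by
    rw [card_filter_subtype_univ P (· ∈ C), filter_mem_eq_inter, inter_eq_right.2 hC]
  have := card_card_filter_apply_le_le_exp_mul (ι := Fin m) (fun x : ↥P => (x : α) ∈ C) hδ hε
    (by rwa [hcount, Fintype.card_coe]) (by rwa [Fintype.card_fin])
  rwa [Fintype.card_coe, Fintype.card_fin] at this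

section OutlierRadius

variable {D m : ℕ} (z' : ℕ) (s : Fin m → EuclideanSpace ℝ (Fin D))
  (T : Finset (EuclideanSpace ℝ (Fin D)))

theorem exists_card_eq_forall_infDist_le_outlierRadius :
    ∃ I : Finset (Fin m), #I = m - z' ∧
      ∀ i ∈ I, Metric.infDist (s i) T ≤ outlierRadius m z' s T := by
  set f : Finset (Fin m) → ℝ := fun I => ⨆ i : ↥I, Metric.infDist (s i.1) (T : Set _)
  have hfin : {r : ℝ | ∃ I : Finset (Fin m), #I = m - z' ∧ r = f I}.Finite :=
    (Set.finite_range f).subset fun _ ⟨I, _, hr⟩ => ⟨I, hr.symm⟩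
  obtain ⟨I₀, -, hI₀⟩ := exists_subset_card_eq (s := (univ : Finset (Fin m))) (n := m - z')
    (by simp)
  have hne : {r : ℝ | ∃ I : Finset (Fin m), #I = m - z' ∧ r = f I}.Nonempty :=
    ⟨f I₀, I₀, hI₀, rfl⟩
  obtain ⟨I, hI, hrad⟩ := hne.csInf_mem hfin
  refine ⟨I, hI, fun i hi => ?_⟩
  rw [outlierRadius, hrad]
  exact le_ciSup (f := fun i : ↥I => Metric.infDist (s i.1) (T : Set _))
    (Set.finite_range _).bddAbove ⟨i, hi⟩

theorem outlierRadius_le_of_card_filter_not_mem_le {A : Finset (EuclideanSpace ℝ (Fin D))}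
    {r : ℝ} (hr : 0 ≤ r) (hA : ∀ p ∈ A, Metric.infDist p T ≤ r) (h : #{i | s i ∉ A} ≤ z') :
    outlierRadius m z' s T ≤ r := by
  obtain ⟨I, hIA, hI⟩ := exists_subset_card_eq (s := ({i | s i ∈ A} : Finset (Fin m)))
    (n := m - z') (by
      have := card_filter_add_card_filter_not (s := univ) fun i => s i ∈ A
      simp only [card_univ, Fintype.card_fin] at this
      omega)
  have hbdd : BddBelow {r : ℝ | ∃ I : Finset (Fin m), #I = m - z' ∧
      r = ⨆ i : ↥I, Metric.infDist (s i.1) (T : Set _)} := by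
    refine ⟨0, ?_⟩
    rintro _ ⟨J, -, rfl⟩
    exact Real.iSup_nonneg fun _ => Metric.infDist_nonneg
  exact (csInf_le hbdd ⟨I, hI, rfl⟩).trans
    (Real.iSup_le (fun i => hA _ (mem_filter.1 (hIA i.2)).2) hr)

end OutlierRadius

theorem infDist_le_of_sample_meets_every_cluster {D k m z' : ℕ} (hk : 0 < k)
    {Popt : Finset (EuclideanSpace ℝ (Fin D))} {C : Fin k → Finset (EuclideanSpace ℝ (Fin D))}
    (hCcover : ∀ p ∈ Popt, ∃ j, p ∈ C j) {ropt : ℝ} (hropt : 0 ≤ ropt)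
    (hball : ∀ j, ∃ x : EuclideanSpace ℝ (Fin D), ∀ p ∈ C j, dist p x ≤ ropt)
    {s : Fin m → EuclideanSpace ℝ (Fin D)} (hout : #{i | s i ∉ Popt} ≤ z')
    (hhit : ∀ j, z' < #{i | s i ∈ C j}) {c : ℝ} (hc : 0 ≤ c)
    {H : Finset (EuclideanSpace ℝ (Fin D))} (hH : #H = k)
    (happrox : ∀ K : Finset (EuclideanSpace ℝ (Fin D)), K.Nonempty → #K = k →
      outlierRadius m z' s H ≤ c * outlierRadius m z' s K) :
    ∀ p ∈ Popt, Metric.infDist p H ≤ (c + 2) * ropt := by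
  choose x hx using hball
  -- `K` is found inside `range x ∪ H`: the space itself may have fewer than `k` points.
  obtain ⟨K, hxK, -, hK⟩ := exists_subsuperset_card_eq
    (subset_union_left (s₁ := univ.image x) (s₂ := H))
    (card_image_le.trans (by simp))
    (hH ▸ card_le_card subset_union_right)
  have hRK : outlierRadius m z' s K ≤ ropt := by
    refine outlierRadius_le_of_card_filter_not_mem_le z' s K hropt (fun p hp => ?_) hout
    obtain ⟨j, hpj⟩ := hCcover p hp
    exact (Metric.infDist_le_dist_of_mem (hxK (mem_image_of_mem x (mem_univ j)))).trans
      (hx j p hpj)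
  have hRH : outlierRadius m z' s H ≤ c * ropt :=
    (happrox K (card_pos.1 (hK ▸ hk)) hK).trans (mul_le_mul_of_nonneg_left hRK hc)
  obtain ⟨J, hJ, hJH⟩ := exists_card_eq_forall_infDist_le_outlierRadius z' s H
  intro p hp
  obtain ⟨j, hpj⟩ := hCcover p hp
  obtain ⟨i, hi⟩ := inter_nonempty_of_card_lt_card_add_card (subset_univ {i | s i ∈ C j})
    (subset_univ J) (by
      have := card_le_univ ({i | s i ∈ C j} : Finset (Fin m))
      have := hhit j
      simp only [card_univ, Fintype.card_fin] at *
      omega)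
  obtain ⟨hiC, hiJ⟩ := mem_inter.1 hi
  calc Metric.infDist p H ≤ Metric.infDist (s i) H + dist p (s i) :=
        Metric.infDist_le_infDist_add_dist
    _ ≤ c * ropt + (ropt + ropt) :=
        add_le_add ((hJH i hiJ).trans hRH)
          ((dist_triangle_right p (s i) (x j)).trans
            (add_le_add (hx j p hpj) (hx j _ (mem_filter.1 hiC).2)))
    _ = (c + 2) * ropt := by ring

theorem exp_neg_le_of_le_sample_size {k m : ℕ} (hk : 0 < k) {ε δ η : ℝ} (hε : 0 < ε)
    (hδ : 0 < δ) (hη0 : 0 < η) (hη1 : η < 1)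
    (hm : (3 * k : ℝ) / (δ ^ 2 * ε) * Real.log (2 * k / η) ≤ m) :
    Real.exp (-(ε / k * δ ^ 2 * m / 2)) ≤ η / (2 * k) := by
  have hk' : (1 : ℝ) ≤ k := by exact_mod_cast hk
  have hlog : 0 ≤ Real.log (2 * k / η) := Real.log_nonneg ((le_div_iff₀ hη0).2 (by linarith))
  have hm' : 3 / 2 * Real.log (2 * k / η) ≤ ε / k * δ ^ 2 * m / 2 := by
    have := mul_le_mul_of_nonneg_left hm (by positivity : 0 ≤ ε / k * δ ^ 2 / 2)
    field_simp at this ⊢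
    linarith
  calc Real.exp (-(ε / k * δ ^ 2 * m / 2)) ≤ Real.exp (-Real.log (2 * k / η)) := by
        gcongr; linarith
    _ = η / (2 * k) := by rw [Real.exp_neg, Real.exp_log (by positivity), inv_div]

theorem uniform_sampling_kcenter_outliers_II_general {D : ℕ} (k n z : ℕ) (hk : 0 < k)
    (hzn : z < n)
    (P Popt : Finset (EuclideanSpace ℝ (Fin D)))
    (hPcard : P.card = n) (hPopt : Popt ⊆ P) (hPoptcard : Popt.card = n - z)
    (C : Fin k → Finset (EuclideanSpace ℝ (Fin D)))
    (hCsub : ∀ j, C j ⊆ Popt)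
    (hCcover : ∀ p ∈ Popt, ∃ j, p ∈ C j)
    (ropt : ℝ) (hropt : 0 ≤ ropt)
    (hball : ∀ j, ∃ x : EuclideanSpace ℝ (Fin D), ∀ p ∈ C j, dist p x ≤ ropt)
    (ε₁ ε₂ : ℝ) (hε₁ : 0 < ε₁)
    (hsig : ∀ j, (ε₁ / k) * n ≤ ((C j).card : ℝ))
    (hzval : (z : ℝ) = (ε₂ / k) * n)
    (η δ : ℝ) (hη0 : 0 < η) (hη1 : η < 1) (hδ0 : 0 < δ)
    (m : ℕ)
    (hmlb : ((3 * k : ℝ) / (δ ^ 2 * ε₁)) * Real.log (2 * k / η) ≤ (m : ℝ))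
    (z' : ℕ) (hz'lb : ε₂ / (k * η) * m ≤ (z' : ℝ))
    (hz'ub : (z' : ℝ) < (1 - δ) * (ε₁ / k) * m) :
    1 - 2 * η ≤
      ((Finset.univ.filter fun s : Fin m → ↥P =>
          ∀ c : ℝ, 1 ≤ c →
            ∀ H : Finset (EuclideanSpace ℝ (Fin D)), H.Nonempty → H.card = k →
              (∀ K : Finset (EuclideanSpace ℝ (Fin D)), K.Nonempty → K.card = k →
                outlierRadius m z' (fun i => (s i : EuclideanSpace ℝ (Fin D))) H ≤
                  c * outlierRadius m z' (fun i => (s i : EuclideanSpace ℝ (Fin D))) K) →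
              ∃ P' ⊆ P, P'.card = n - z ∧
                ∀ p ∈ P', Metric.infDist p (H : Set (EuclideanSpace ℝ (Fin D))) ≤
                  (c + 2) * ropt).card : ℝ)
        / (Fintype.card (Fin m → ↥P) : ℝ) := by
  classical
  have hn : 0 < n := by omega
  have : Nonempty ↥P := ⟨⟨_, (card_pos.1 (hPcard ▸ hn)).choose_spec⟩⟩
  have hout := card_sample_lt_card_filter_not_mem_le (m := m) (t := z') (η := η) hPopt (by
    rw [hPcard, hPoptcard, Nat.cast_sub hzn.le, sub_sub_cancel, hzval]
    have : (0 : ℝ) < n := by exact_mod_cast hn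
    calc (m : ℝ) * (ε₂ / k * n / n) = η * (ε₂ / (k * η) * m) := by field_simp
      _ ≤ η * (z' + 1) := by gcongr; linarith)
  have hhit j := card_sample_card_filter_mem_le_le ((hCsub j).trans hPopt) hδ0.le
    (by positivity) (by rw [hPcard]; exact hsig j) hz'ub.le
  rw [hPcard] at hout hhit
  refine one_sub_le_card_filter_div_card_s8 _ ((card_filter_not_le_card_filter_add_sum _
    (fun s => z' < #{i | (s i : EuclideanSpace ℝ (Fin D)) ∉ Popt})
    (fun j s => #{i | (s i : EuclideanSpace ℝ (Fin D)) ∈ C j} ≤ z')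
    fun s hA hB c hc H _ hH happrox => ⟨Popt, hPopt, hPoptcard,
      infDist_le_of_sample_meets_every_cluster hk hCcover hropt hball (not_lt.1 hA)
        (fun j => not_le.1 (hB j)) (by linarith) hH happrox⟩).trans ?_)
  rw [Fintype.card_fun, Fintype.card_fin, Fintype.card_coe, hPcard, Nat.cast_pow]
  have hexp := exp_neg_le_of_le_sample_size hk hε₁ hδ0 hη0 hη1 hmlb
  calc _ ≤ η * n ^ m + ∑ _j : Fin k, η / (2 * k) * n ^ m :=
        add_le_add hout (sum_le_sum fun j _ => (hhit j).trans (by gcongr))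
    _ ≤ 2 * η * n ^ m := by
      rw [sum_const, card_univ, Fintype.card_fin, nsmul_eq_mul]
      field_simp
      nlinarith [pow_nonneg (Nat.cast_nonneg (α := ℝ) n) m]

/-- Uniform sampling for k-center clustering with outliers (Algorithm II /
Theorem 2). For an `(ε₁,ε₂)`-significant instance with `ε₁/ε₂ > 1/(η(1−δ))`, sample size
`m ≥ (3k/(δ²ε₁))·log(2k/η)` and `(ε₂/(kη))·m ≤ z' < (1−δ)·(ε₁/k)·m`: with probability at
least `1 − 2η`, every `c`-approximate solution `H` (with `|H| = k`) of k-center clustering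
with `z'` outliers on the sample satisfies `Δ^{-z}_∞(P,H) ≤ (c+2)·r_opt`. -/
theorem uniform_sampling_kcenter_outliers_II {D : ℕ} (k n z : ℕ) (hk : 0 < k)
    (hz0 : 0 < z) (hzn : z < n)
    (P Popt : Finset (EuclideanSpace ℝ (Fin D)))
    (hPcard : P.card = n) (hPopt : Popt ⊆ P) (hPoptcard : Popt.card = n - z)
    (C : Fin k → Finset (EuclideanSpace ℝ (Fin D)))
    (hCne : ∀ j, (C j).Nonempty)
    (hCsub : ∀ j, C j ⊆ Popt)
    (hCdisj : ∀ j j', j ≠ j' → Disjoint (C j) (C j'))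
    (hCcover : ∀ p ∈ Popt, ∃ j, p ∈ C j)
    (ropt : ℝ) (hropt : 0 ≤ ropt)
    (hball : ∀ j, ∃ x : EuclideanSpace ℝ (Fin D), ∀ p ∈ C j, dist p x ≤ ropt)
    (ε₁ ε₂ : ℝ) (hε₁ : 0 < ε₁) (hε₂ : 0 < ε₂)
    (hsig : ∀ j, (ε₁ / k) * n ≤ ((C j).card : ℝ))
    (hzval : (z : ℝ) = (ε₂ / k) * n)
    (η δ : ℝ) (hη0 : 0 < η) (hη1 : η < 1) (hδ0 : 0 < δ) (hδ1 : δ < 1)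
    (hratio : 1 / (η * (1 - δ)) < ε₁ / ε₂)
    (m : ℕ) (hm : 0 < m)
    (hmlb : ((3 * k : ℝ) / (δ ^ 2 * ε₁)) * Real.log (2 * k / η) ≤ (m : ℝ))
    (z' : ℕ) (hz'lb : ε₂ / (k * η) * m ≤ (z' : ℝ))
    (hz'ub : (z' : ℝ) < (1 - δ) * (ε₁ / k) * m) :
    1 - 2 * η ≤
      ((Finset.univ.filter fun s : Fin m → ↥P =>
          ∀ c : ℝ, 1 ≤ c →
            ∀ H : Finset (EuclideanSpace ℝ (Fin D)), H.Nonempty → H.card = k →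
              (∀ K : Finset (EuclideanSpace ℝ (Fin D)), K.Nonempty → K.card = k →
                outlierRadius m z' (fun i => (s i : EuclideanSpace ℝ (Fin D))) H ≤
                  c * outlierRadius m z' (fun i => (s i : EuclideanSpace ℝ (Fin D))) K) →
              ∃ P' ⊆ P, P'.card = n - z ∧
                ∀ p ∈ P', Metric.infDist p (H : Set (EuclideanSpace ℝ (Fin D))) ≤
                  (c + 2) * ropt).card : ℝ)
        / (Fintype.card (Fin m → ↥P) : ℝ) :=
  uniform_sampling_kcenter_outliers_II_general k n z hk hzn P Popt hPcard hPopt hPoptcard C hCsub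
    hCcover ropt hropt hball ε₁ ε₂ hε₁ hsig hzval η δ hη0 hη1 hδ0 m hmlb z' hz'lb hz'ub
end

section
/- Given an (ε₁,ε₂)-significant instance with clusters C*_1,…,C*_k, designated points o*_1,…,o*_k ∈ ℝ^D, and L > 0 such that ‖p − o*_j‖ ≤ L for every p ∈ C*_j and every j, let η, δ, ξ ∈ (0,1) and let m be a positive integer with m ≥ max{ (3k/(δ²ε₁))·log(2k/η), (k/(2ξ²ε₁(1−δ)))·log(2k/η) }. Draw an i.i.d. uniform sample s : {1,…,m} → P. Then with probability at least 1 − 2η, for every j ∈ {1,…,k}: Σ_{i : s_i ∈ C*_j} ‖s_i − o*_j‖² ≤ (1+δ)·(m/n)·( Σ_{p∈C*_j} ‖p − o*_j‖² + ξ·|C*_j|·L² ). -/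
open scoped Classical
open Finset

/-!
For a fixed cluster `C` the sample cost is a sum of `m` independent copies of
`Y p = 𝟙[p ∈ C] ‖p - o‖²`, a variable with values in `[0, L²]` and sum over `P` at most
`∑ p ∈ C, ‖p - o‖²`. Exponential Markov with parameter `δ / L²`, the convexity bound
`exp (δ y / L²) ≤ 1 + (y / L²) (exp δ - 1)` and `exp δ - 1 ≤ δ + δ²` bound the probability that the
cost exceeds `(1 + δ) (m / n) (∑ p ∈ C, ‖p - o‖² + ξ |C| L²)` by `exp (-δ ξ |C| m / n)`. The
sample-size hypothesis makes this at most `η / (2k)`, and a union bound over the `k` clusters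
leaves a failure probability of at most `η / 2`.
-/

lemma exp_mul_div_le_one_add {x B : ℝ} (hB : 0 < B) (hx0 : 0 ≤ x) (hxB : x ≤ B) (u : ℝ) :
    Real.exp (u * x / B) ≤ 1 + x / B * (Real.exp u - 1) := by
  have hθ0 : 0 ≤ x / B := div_nonneg hx0 hB.le
  have hθ1 : x / B ≤ 1 := (div_le_one hB).2 hxB
  have h := convexOn_exp.2 (Set.mem_univ 0) (Set.mem_univ u) (sub_nonneg.2 hθ1) hθ0
    (sub_add_cancel 1 _)
  simp only [smul_eq_mul, mul_zero, zero_add, Real.exp_zero, mul_one] at h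
  rw [show u * x / B = x / B * u by ring]
  linarith

lemma sum_exp_mul_div_le {α : Type*} [Fintype α] {f : α → ℝ} {B : ℝ} (hB : 0 < B)
    (hf0 : ∀ p, 0 ≤ f p) (hfB : ∀ p, f p ≤ B) (u : ℝ) :
    ∑ p, Real.exp (u * f p / B) ≤ Fintype.card α + (∑ p, f p) / B * (Real.exp u - 1) := by
  calc ∑ p, Real.exp (u * f p / B) ≤ ∑ p, (1 + f p / B * (Real.exp u - 1)) :=
        sum_le_sum fun p _ => exp_mul_div_le_one_add hB (hf0 p) (hfB p) u
    _ = Fintype.card α + (∑ p, f p) / B * (Real.exp u - 1) := by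
        rw [sum_add_distrib, ← sum_mul, ← sum_div]; simp

lemma card_lt_mul_exp_le_sum_exp {S : Type*} [Fintype S] (g : S → ℝ) (a : ℝ) {t : ℝ}
    (ht : 0 ≤ t) : (#{s | a < g s} : ℝ) * Real.exp (t * a) ≤ ∑ s, Real.exp (t * g s) := by
  calc (#{s | a < g s} : ℝ) * Real.exp (t * a) = ∑ s with a < g s, Real.exp (t * a) := by
        rw [sum_const, nsmul_eq_mul]
    _ ≤ ∑ s with a < g s, Real.exp (t * g s) :=
        sum_le_sum fun s hs => Real.exp_le_exp.2 <|
          mul_le_mul_of_nonneg_left (mem_filter.1 hs).2.le ht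
    _ ≤ ∑ s, Real.exp (t * g s) :=
        sum_le_sum_of_subset_of_nonneg (subset_univ _) fun s _ _ => (Real.exp_pos _).le

lemma sum_exp_mul_sum_comp_eq_pow {α : Type*} [Fintype α] (f : α → ℝ) (t : ℝ) (m : ℕ) :
    ∑ s : Fin m → α, Real.exp (t * ∑ i, f (s i)) = (∑ p, Real.exp (t * f p)) ^ m := by
  simp only [Fintype.sum_pow, mul_sum, Real.exp_sum]

/-- Multiplicative Chernoff bound, in counting form, for a sample sum of a `[0, B]`-valued
function: exponential Markov at `t = δ / B`, where the moment generating function is controlled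
by convexity of `exp` and `exp δ - 1 ≤ δ + δ²`. -/
theorem card_sum_sample_gt_le {α : Type*} [Fintype α] [Nonempty α] {f : α → ℝ} {A B G δ : ℝ}
    (hB : 0 < B) (hf0 : ∀ p, 0 ≤ f p) (hfB : ∀ p, f p ≤ B) (hfA : ∑ p, f p ≤ A) (hG : 0 ≤ G)
    (hδ0 : 0 ≤ δ) (hδ1 : δ ≤ 1) (m : ℕ) :
    (#{s : Fin m → α | (1 + δ) * (m / Fintype.card α) * (A + G) < ∑ i, f (s i)} : ℝ) ≤
      Fintype.card α ^ m * Real.exp (-(δ * m * G / (Fintype.card α * B))) := by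
  set N : ℝ := (Fintype.card α : ℝ)
  have hN : 0 < N := by simp [N, Fintype.card_pos]
  set a := (1 + δ) * (m / N) * (A + G)
  set t := δ / B
  have hA : 0 ≤ A := (sum_nonneg fun p _ => hf0 p).trans hfA
  have hexpδ : Real.exp δ - 1 ≤ δ + δ ^ 2 := by
    have := abs_le.1 (Real.abs_exp_sub_one_sub_id_le (abs_le.2 ⟨by linarith, hδ1⟩))
    linarith [this.2]
  have hmgf : ∑ p, Real.exp (t * f p) ≤ N * Real.exp (A / (N * B) * (δ + δ ^ 2)) := by
    calc ∑ p, Real.exp (t * f p) = ∑ p, Real.exp (δ * f p / B) := by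
          simp only [t, div_mul_eq_mul_div]
      _ ≤ N + (∑ p, f p) / B * (Real.exp δ - 1) := sum_exp_mul_div_le hB hf0 hfB δ
      _ ≤ N + A / B * (δ + δ ^ 2) := by gcongr; linarith [Real.add_one_le_exp δ]
      _ = N * (1 + A / (N * B) * (δ + δ ^ 2)) := by field_simp
      _ ≤ N * Real.exp (A / (N * B) * (δ + δ ^ 2)) := by
          gcongr; linarith [Real.add_one_le_exp (A / (N * B) * (δ + δ ^ 2))]
  have hchernoff : (#{s : Fin m → α | a < ∑ i, f (s i)} : ℝ) * Real.exp (t * a) ≤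
      N ^ m * Real.exp (m * (A / (N * B) * (δ + δ ^ 2))) := by
    calc _ ≤ ∑ s : Fin m → α, Real.exp (t * ∑ i, f (s i)) :=
          card_lt_mul_exp_le_sum_exp _ a (by positivity)
      _ = (∑ p, Real.exp (t * f p)) ^ m := sum_exp_mul_sum_comp_eq_pow f t m
      _ ≤ (N * Real.exp (A / (N * B) * (δ + δ ^ 2))) ^ m := by gcongr
      _ = N ^ m * Real.exp (m * (A / (N * B) * (δ + δ ^ 2))) := by
          rw [mul_pow, Real.exp_nat_mul]
  have hexponent : m * (A / (N * B) * (δ + δ ^ 2)) - t * a ≤ -(δ * m * G / (N * B)) := by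
    have : m * (A / (N * B) * (δ + δ ^ 2)) - t * a =
        -(δ * m * G / (N * B)) - δ ^ 2 * m * G / (N * B) := by
      simp only [a, t]; field_simp; ring
    rw [this]
    linarith [show 0 ≤ δ ^ 2 * m * G / (N * B) by positivity]
  rw [← le_div_iff₀ (Real.exp_pos _), mul_div_assoc, ← Real.exp_sub] at hchernoff
  exact hchernoff.trans (by gcongr)

theorem card_sample_cluster_cost_gt_le {E : Type*} [DecidableEq E] {P : Finset E} (hP : P.Nonempty)
    (C : Finset E) {d : E → ℝ} {B : ℝ} (hB : 0 < B) (hd0 : ∀ p ∈ C, 0 ≤ d p)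
    (hdB : ∀ p ∈ C, d p ≤ B) {δ ξ : ℝ} (hδ0 : 0 ≤ δ) (hδ1 : δ ≤ 1) (hξ : 0 ≤ ξ) (m : ℕ) :
    (#{s : Fin m → P | (1 + δ) * (m / #P) * (∑ p ∈ C, d p + ξ * #C * B) <
        ∑ i with (s i : E) ∈ C, d (s i)} : ℝ) ≤
      #P ^ m * Real.exp (-(δ * ξ * #C * m / #P)) := by
  have := hP.to_subtype
  set f : P → ℝ := fun p => if (p : E) ∈ C then d p else 0
  have hf0 : ∀ p, 0 ≤ f p := fun p => by
    simp only [f]; split_ifs with hp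
    exacts [hd0 _ hp, le_rfl]
  have hfB : ∀ p, f p ≤ B := fun p => by
    simp only [f]; split_ifs with hp
    exacts [hdB _ hp, hB.le]
  have hfC : ∑ p, f p ≤ ∑ p ∈ C, d p := by
    rw [sum_coe_sort P fun q => if q ∈ C then d q else 0, ← sum_filter]
    exact sum_le_sum_of_subset_of_nonneg (fun p hp => (mem_filter.1 hp).2) fun p hp _ => hd0 p hp
  have h := card_sum_sample_gt_le (G := ξ * #C * B) hB hf0 hfB hfC (by positivity) hδ0 hδ1 m
  simp only [Fintype.card_coe] at h
  convert h using 3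
  · simp only [f, sum_filter]
  · field_simp

lemma one_sub_mul_le_card_filter_forall_div {S ι : Type*} [Fintype S] [Nonempty S] [Fintype ι]
    (p : ι → S → Prop) [DecidablePred fun s => ∀ j, p j s] [∀ j, DecidablePred fun s => ¬ p j s]
    {β : ℝ} (hp : ∀ j, (#{s | ¬ p j s} : ℝ) ≤ β * Fintype.card S) :
    1 - Fintype.card ι * β ≤ (#{s | ∀ j, p j s} : ℝ) / Fintype.card S := by
  have hunion : (#{s | ¬ ∀ j, p j s} : ℝ) ≤ ∑ j, (#{s | ¬ p j s} : ℝ) := by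
    refine mod_cast (card_le_card fun s hs => ?_).trans card_biUnion_le
    obtain ⟨j, hj⟩ := not_forall.1 (mem_filter.1 hs).2
    exact mem_biUnion.2 ⟨j, mem_univ j, mem_filter.2 ⟨mem_univ s, hj⟩⟩
  have hsplit : (#{s | ∀ j, p j s} : ℝ) + #{s | ¬ ∀ j, p j s} = Fintype.card S :=
    mod_cast card_filter_add_card_filter_not (s := univ) _
  have hsum := sum_le_sum fun j (_ : j ∈ univ) => hp j
  rw [sum_const, card_univ, nsmul_eq_mul] at hsum
  rw [le_div_iff₀ (mod_cast Fintype.card_pos)]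
  linarith

lemma mul_le_of_sq_le_mul {c x y T m : ℝ} (hc : 0 ≤ c) (hy : 0 ≤ y) (hm : 0 ≤ m)
    (hcxy : c ^ 2 ≤ x * y) (hxT : x * T ≤ m) (hyT : y * T ≤ m) : c * T ≤ m := by
  rcases le_or_gt T 0 with hT | hT
  · nlinarith
  · have : (c * T) ^ 2 ≤ m ^ 2 :=
      calc (c * T) ^ 2 = c ^ 2 * T ^ 2 := by ring
        _ ≤ (x * y) * T ^ 2 := by gcongr
        _ = (x * T) * (y * T) := by ring
        _ ≤ m * m := mul_le_mul hxT hyT (by positivity) hm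
        _ = m ^ 2 := by ring
    exact abs_le_of_sq_le_sq' this hm |>.2

/-- `m` dominates the geometric mean of the two sample-size bounds, which is at least
`k T / (δ ξ ε₁)`. -/
lemma le_mul_div_of_sample_size_le {k δ ξ ε₁ T m : ℝ} (hk : 0 < k) (hδ0 : 0 < δ) (hδ1 : δ < 1)
    (hξ : 0 < ξ) (hε₁ : 0 < ε₁) (hm : 0 ≤ m)
    (h : max (3 * k / (δ ^ 2 * ε₁) * T) (k / (2 * ξ ^ 2 * ε₁ * (1 - δ)) * T) ≤ m) :
    T ≤ δ * ξ * ε₁ * m / k := by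
  have h1δ : 0 < 1 - δ := sub_pos.2 hδ1
  have hTm : k / (δ * ξ * ε₁) * T ≤ m := by
    refine mul_le_of_sq_le_mul (by positivity) (div_pos hk (by positivity)).le hm ?_
      ((le_max_left _ _).trans h) ((le_max_right _ _).trans h)
    rw [show 3 * k / (δ ^ 2 * ε₁) * (k / (2 * ξ ^ 2 * ε₁ * (1 - δ))) =
        (k / (δ * ξ * ε₁)) ^ 2 * (3 / (2 * (1 - δ))) by field_simp]
    exact le_mul_of_one_le_right (by positivity) ((one_le_div (by linarith)).2 (by linarith))
  rw [div_mul_eq_mul_div, div_le_iff₀ (by positivity)] at hTm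
  rw [le_div_iff₀ hk]
  linarith

theorem uniform_sample_cluster_cost_bound_general {D : ℕ} (k n z : ℕ)
    (hzn : z < n)
    (P : Finset (EuclideanSpace ℝ (Fin D)))
    (hPcard : P.card = n)
    (C : Fin k → Finset (EuclideanSpace ℝ (Fin D)))
    (o : Fin k → EuclideanSpace ℝ (Fin D))
    (L : ℝ) (hL : 0 < L) (hCL : ∀ j, ∀ p ∈ C j, ‖p - o j‖ ≤ L)
    (ε₁ : ℝ) (hε₁ : 0 < ε₁)
    (hsig : ∀ j, (ε₁ / k) * n ≤ ((C j).card : ℝ))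
    (η δ ξ : ℝ) (hη0 : 0 < η) (hδ0 : 0 < δ) (hδ1 : δ < 1)
    (hξ0 : 0 < ξ)
    (m : ℕ)
    (hmlb : max (((3 * k : ℝ) / (δ ^ 2 * ε₁)) * Real.log (2 * k / η))
        (((k : ℝ) / (2 * ξ ^ 2 * ε₁ * (1 - δ))) * Real.log (2 * k / η)) ≤ (m : ℝ)) :
    1 - 2 * η ≤
      ((Finset.univ.filter fun s : Fin m → ↥P =>
          ∀ j : Fin k,
            ∑ i ∈ Finset.univ.filter
                (fun i : Fin m => (s i : EuclideanSpace ℝ (Fin D)) ∈ C j),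
              ‖(s i : EuclideanSpace ℝ (Fin D)) - o j‖ ^ 2 ≤
            (1 + δ) * ((m : ℝ) / n) *
              (∑ p ∈ C j, ‖p - o j‖ ^ 2 + ξ * ((C j).card : ℝ) * L ^ 2)).card : ℝ)
        / (Fintype.card (Fin m → ↥P) : ℝ) := by
  have hn : (0 : ℝ) < n := mod_cast hzn.pos
  have hP : P.Nonempty := card_pos.1 (hPcard ▸ hzn.pos)
  have := hP.to_subtype
  have hηk : (k : ℝ) * (η / (2 * k)) ≤ η / 2 :=
    calc (k : ℝ) * (η / (2 * k)) = η / 2 * (k / k) := by ring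
      _ ≤ η / 2 := mul_le_of_le_one_right (by positivity) (div_self_le_one _)
  refine le_trans ?_ (one_sub_mul_le_card_filter_forall_div _ (β := η / (2 * k)) fun j => ?_)
  · rw [Fintype.card_fin]
    linarith
  have hk : (0 : ℝ) < k := mod_cast j.pos
  have hT : Real.log (2 * k / η) ≤ δ * ξ * #(C j) * m / n :=
    calc Real.log (2 * k / η) ≤ δ * ξ * ε₁ * m / k :=
          le_mul_div_of_sample_size_le hk hδ0 hδ1 hξ0 hε₁ m.cast_nonneg hmlb
      _ = δ * ξ * (ε₁ / k * n) * m / n := by field_simp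
      _ ≤ δ * ξ * #(C j) * m / n := by gcongr; exact hsig j
  have htail := card_sample_cluster_cost_gt_le hP (C j) (d := fun p => ‖p - o j‖ ^ 2)
    (B := L ^ 2) (by positivity) (fun p _ => by positivity)
    (fun p hp => pow_le_pow_left₀ (norm_nonneg _) (hCL j p hp) 2) hδ0.le hδ1.le hξ0.le m
  rw [hPcard] at htail
  simp only [Fintype.card_fun, Fintype.card_coe, Fintype.card_fin, hPcard, Nat.cast_pow]
  calc _ ≤ _ := mod_cast card_le_card fun s hs =>
        mem_filter.2 ⟨mem_univ s, lt_of_not_ge (mem_filter.1 hs).2⟩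
    _ ≤ n ^ m * Real.exp (-(δ * ξ * #(C j) * m / n)) := htail
    _ ≤ n ^ m * Real.exp (-Real.log (2 * k / η)) := by gcongr
    _ = η / (2 * k) * n ^ m := by
        rw [Real.exp_neg, Real.exp_log (by positivity), inv_div, mul_comm]

/-- (Lemma 5 of the paper.) For an `(ε₁,ε₂)`-significant instance with cluster
representatives `o*_j` and diameter bound `L`, a uniform i.i.d. sample of size
`m ≥ max{(3k/(δ²ε₁))·log(2k/η), (k/(2ξ²ε₁(1−δ)))·log(2k/η)}` satisfies, with probability at
least `1 − 2η`, `Σ_{i : s_i ∈ C*_j} ‖s_i − o*_j‖² ≤ (1+δ)(m/n)(Σ_{p∈C*_j}‖p−o*_j‖² + ξ|C*_j|L²)`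
for every `j`. -/
theorem uniform_sample_cluster_cost_bound {D : ℕ} (k n z : ℕ) (hk : 0 < k)
    (hz0 : 0 < z) (hzn : z < n)
    (P Popt : Finset (EuclideanSpace ℝ (Fin D)))
    (hPcard : P.card = n) (hPopt : Popt ⊆ P) (hPoptcard : Popt.card = n - z)
    (C : Fin k → Finset (EuclideanSpace ℝ (Fin D)))
    (hCne : ∀ j, (C j).Nonempty)
    (hCsub : ∀ j, C j ⊆ Popt)
    (hCdisj : ∀ j j', j ≠ j' → Disjoint (C j) (C j'))
    (hCcover : ∀ p ∈ Popt, ∃ j, p ∈ C j)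
    (o : Fin k → EuclideanSpace ℝ (Fin D))
    (L : ℝ) (hL : 0 < L) (hCL : ∀ j, ∀ p ∈ C j, ‖p - o j‖ ≤ L)
    (ε₁ ε₂ : ℝ) (hε₁ : 0 < ε₁) (hε₂ : 0 < ε₂)
    (hsig : ∀ j, (ε₁ / k) * n ≤ ((C j).card : ℝ))
    (hzval : (z : ℝ) = (ε₂ / k) * n)
    (η δ ξ : ℝ) (hη0 : 0 < η) (hη1 : η < 1) (hδ0 : 0 < δ) (hδ1 : δ < 1)
    (hξ0 : 0 < ξ) (hξ1 : ξ < 1)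
    (m : ℕ) (hm : 0 < m)
    (hmlb : max (((3 * k : ℝ) / (δ ^ 2 * ε₁)) * Real.log (2 * k / η))
        (((k : ℝ) / (2 * ξ ^ 2 * ε₁ * (1 - δ))) * Real.log (2 * k / η)) ≤ (m : ℝ)) :
    1 - 2 * η ≤
      ((Finset.univ.filter fun s : Fin m → ↥P =>
          ∀ j : Fin k,
            ∑ i ∈ Finset.univ.filter
                (fun i : Fin m => (s i : EuclideanSpace ℝ (Fin D)) ∈ C j),
              ‖(s i : EuclideanSpace ℝ (Fin D)) - o j‖ ^ 2 ≤
            (1 + δ) * ((m : ℝ) / n) *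
              (∑ p ∈ C j, ‖p - o j‖ ^ 2 + ξ * ((C j).card : ℝ) * L ^ 2)).card : ℝ)
        / (Fintype.card (Fin m → ↥P) : ℝ) :=
  uniform_sample_cluster_cost_bound_general k n z hzn P hPcard C o L hL hCL ε₁ hε₁ hsig η δ ξ hη0
    hδ0 hδ1 hξ0 m hmlb
end

section
/- Let P ⊆ ℝ^D be finite, let P_opt ⊆ P be partitioned into nonempty clusters C*_1,…,C*_k, let o*_1,…,o*_k ∈ ℝ^D, and let O* = {o*_1,…,o*_k}. Let S ⊆ P be finite, let k' be a natural number with k' < |S| and |S \ P_opt| ≤ k', let c ≥ 1, and let H ⊆ ℝ^D be a nonempty finite set with Cost(S, H) ≤ c · min{ Cost(S, K) : K ⊆ ℝ^D, |K| = k + k' } (i.e., H is a c-approximate solution of (k+k')-means clustering on S). Then, writing S_opt = S ∩ P_opt: Σ_{j=1}^k |S ∩ C*_j| · dist(o*_j, H)² ≤ (2 + 2c) · Σ_{j=1}^k Σ_{q∈S∩C*_j} ‖q − o*_j‖². -/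
open scoped Classical
open Finset

/-- `Cost(X, H) = Σ_{q∈X} dist(q, H)²`, where `dist(q,H)` is the distance from `q` to the
nearest point of `H`. -/
noncomputable def costSq {D : ℕ} (X H : Finset (EuclideanSpace ℝ (Fin D))) : ℝ :=
  ∑ q ∈ X, Metric.infDist q (H : Set (EuclideanSpace ℝ (Fin D))) ^ 2

/-! The (k+k')-means cost of `S` is at most `Σ_j Σ_{q∈S∩C*_j} ‖q − o*_j‖²`, witnessed by the
centres `O*` together with the at most `k'` outliers `S \ P_opt`, padded to `k + k'` points.
Moving each `q ∈ S∩C*_j` to `o*_j` costs, by the relaxed triangle inequality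
`(a + b)² ≤ 2a² + 2b²`, at most `2‖q − o*_j‖² + 2 dist(q, H)²`; summing and using that `H` is
`c`-approximate gives the factor `2 + 2c`. -/

namespace Metric

variable {α : Type*} [PseudoMetricSpace α]

lemma infDist_eq_zero_of_subsingleton [Subsingleton α] (x : α) (s : Set α) :
    infDist x s = 0 := by
  rcases s.eq_empty_or_nonempty with rfl | ⟨y, hy⟩
  · exact infDist_empty
  · exact infDist_zero_of_mem (Subsingleton.elim y x ▸ hy)

lemma infDist_sq_le_two_mul_dist_sq_add (x y : α) (s : Set α) :
    infDist x s ^ 2 ≤ 2 * dist x y ^ 2 + 2 * infDist y s ^ 2 := by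
  have h := infDist_le_infDist_add_dist (x := x) (y := y) (s := s)
  nlinarith [infDist_nonneg (x := x) (s := s), sq_nonneg (infDist y s - dist x y)]

lemma card_mul_infDist_sq_le (T : Finset α) (o : α) (s : Set α) :
    #T * infDist o s ^ 2 ≤ 2 * ∑ q ∈ T, dist q o ^ 2 + 2 * ∑ q ∈ T, infDist q s ^ 2 := by
  rw [← nsmul_eq_mul, ← sum_const, mul_sum, mul_sum, ← sum_add_distrib]
  gcongr with q
  simpa only [dist_comm] using infDist_sq_le_two_mul_dist_sq_add o q s

lemma sum_card_mul_infDist_sq_le {ι : Type*} (I : Finset ι) (T : ι → Finset α) (o : ι → α)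
    (s : Set α) :
    ∑ j ∈ I, #(T j) * infDist (o j) s ^ 2 ≤
      2 * ∑ j ∈ I, ∑ q ∈ T j, dist q (o j) ^ 2 + 2 * ∑ j ∈ I, ∑ q ∈ T j, infDist q s ^ 2 := by
  rw [mul_sum, mul_sum, ← sum_add_distrib]
  exact sum_le_sum fun j _ => card_mul_infDist_sq_le (T j) (o j) s

end Metric

open Function in
lemma Finset.sum_sum_inter_le_sum {ι α M : Type*} [DecidableEq α] [AddCommMonoid M] [Preorder M]
    [AddLeftMono M]
    (I : Finset ι) (S : Finset α) {C : ι → Finset α} (hC : Pairwise (Disjoint on C))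
    {f : α → M} (hf : ∀ q ∈ S, 0 ≤ f q) :
    ∑ j ∈ I, ∑ q ∈ S ∩ C j, f q ≤ ∑ q ∈ S, f q := by
  rw [← sum_biUnion fun i _ j _ hij => (hC hij).mono inter_subset_right inter_subset_right]
  exact sum_le_sum_of_subset_of_nonneg (biUnion_subset.2 fun _ _ => inter_subset_left)
    fun q hq _ => hf q hq

section Cost

variable {D : ℕ} {ι : Type*} [Fintype ι]

lemma costSq_le_sum_sum_inter (S K : Finset (EuclideanSpace ℝ (Fin D)))
    (C : ι → Finset (EuclideanSpace ℝ (Fin D))) (o : ι → EuclideanSpace ℝ (Fin D))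
    (hcover : ∀ q ∈ S, q ∉ K → ∃ j, q ∈ C j) (ho : ∀ j, o j ∈ K) :
    costSq S K ≤ ∑ j, ∑ q ∈ S ∩ C j, ‖q - o j‖ ^ 2 := by
  rw [costSq, sum_comm' (t' := S) (s' := fun q => {j | q ∈ C j}) (by simp [and_comm])]
  refine sum_le_sum fun q hq => ?_
  by_cases hqK : q ∈ K
  · rw [Metric.infDist_zero_of_mem (mem_coe.2 hqK), zero_pow two_ne_zero]
    positivity
  obtain ⟨j, hj⟩ := hcover q hq hqK
  calc Metric.infDist q K ^ 2 ≤ ‖q - o j‖ ^ 2 := by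
        gcongr
        · exact Metric.infDist_nonneg
        · exact dist_eq_norm q (o j) ▸ Metric.infDist_le_dist_of_mem (mem_coe.2 (ho j))
    _ ≤ ∑ i with q ∈ C i, ‖q - o i‖ ^ 2 :=
        single_le_sum (f := fun i => ‖q - o i‖ ^ 2) (fun _ _ => sq_nonneg _) (by simpa using hj)

lemma exists_card_eq_costSq_le_sum_sum_inter [Infinite (EuclideanSpace ℝ (Fin D))]
    (Popt S : Finset (EuclideanSpace ℝ (Fin D))) (C : ι → Finset (EuclideanSpace ℝ (Fin D)))
    (hcover : ∀ p ∈ Popt, ∃ j, p ∈ C j) (o : ι → EuclideanSpace ℝ (Fin D)) {m : ℕ}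
    (hm : Fintype.card ι + #(S \ Popt) ≤ m) :
    ∃ K, #K = m ∧ costSq S K ≤ ∑ j, ∑ q ∈ S ∩ C j, ‖q - o j‖ ^ 2 := by
  have hcard : #(univ.image o ∪ S \ Popt) ≤ m :=
    (card_union_le _ _).trans ((Nat.add_le_add_right card_image_le _).trans hm)
  obtain ⟨K, hsub, hK⟩ := Infinite.exists_superset_card_eq _ m hcard
  refine ⟨K, hK, costSq_le_sum_sum_inter S K C o (fun q hq hqK => hcover q ?_)
    fun j => hsub (mem_union_left _ (mem_image_of_mem o (mem_univ j)))⟩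
  by_contra hqP
  exact hqK (hsub (mem_union_right _ (mem_sdiff.2 ⟨hq, hqP⟩)))

end Cost

theorem star_transformed_sample_cost_bound_general {D : ℕ} (k : ℕ) (hk : 0 < k)
    (Popt : Finset (EuclideanSpace ℝ (Fin D)))
    (C : Fin k → Finset (EuclideanSpace ℝ (Fin D)))
    (hCdisj : ∀ j j', j ≠ j' → Disjoint (C j) (C j'))
    (hCcover : ∀ p ∈ Popt, ∃ j, p ∈ C j)
    (o : Fin k → EuclideanSpace ℝ (Fin D))
    (S : Finset (EuclideanSpace ℝ (Fin D)))
    (k' : ℕ) (houtl : (S \ Popt).card ≤ k')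
    (c : ℝ) (hc : 1 ≤ c)
    (H : Finset (EuclideanSpace ℝ (Fin D)))
    (happrox : ∀ K : Finset (EuclideanSpace ℝ (Fin D)), K.Nonempty → K.card = k + k' →
      costSq S H ≤ c * costSq S K) :
    ∑ j : Fin k, ((S ∩ C j).card : ℝ) *
        Metric.infDist (o j) (H : Set (EuclideanSpace ℝ (Fin D))) ^ 2 ≤
      (2 + 2 * c) * ∑ j : Fin k, ∑ q ∈ S ∩ C j, ‖q - o j‖ ^ 2 := by
  rcases subsingleton_or_nontrivial (EuclideanSpace ℝ (Fin D)) with hE | hE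
  · simp only [Metric.infDist_eq_zero_of_subsingleton, ne_eq, OfNat.ofNat_ne_zero,
      not_false_eq_true, zero_pow, mul_zero, sum_const_zero]
    exact mul_nonneg (by linarith) (by positivity)
  have : Infinite (EuclideanSpace ℝ (Fin D)) := PreconnectedSpace.infinite
  obtain ⟨K, hKcard, hKcost⟩ := exists_card_eq_costSq_le_sum_sum_inter Popt S C hCcover o
    (m := k + k') (by simpa using houtl)
  have hHK := happrox K (card_pos.1 (hKcard ▸ Nat.add_pos_left hk k')) hKcard
  have hsample : ∑ j, ∑ q ∈ S ∩ C j, Metric.infDist q (H : Set _) ^ 2 ≤ costSq S H :=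
    sum_sum_inter_le_sum univ S hCdisj fun q _ => sq_nonneg _
  calc _ ≤ 2 * ∑ j, ∑ q ∈ S ∩ C j, ‖q - o j‖ ^ 2 +
          2 * ∑ j, ∑ q ∈ S ∩ C j, Metric.infDist q (H : Set _) ^ 2 := by
        simpa only [dist_eq_norm] using Metric.sum_card_mul_infDist_sq_le univ _ o (H : Set _)
    _ ≤ 2 * ∑ j, ∑ q ∈ S ∩ C j, ‖q - o j‖ ^ 2 + 2 * (c * costSq S K) := by
        grw [hsample, hHK]
    _ ≤ 2 * ∑ j, ∑ q ∈ S ∩ C j, ‖q - o j‖ ^ 2 + 2 * (c * ∑ j, ∑ q ∈ S ∩ C j, ‖q - o j‖ ^ 2) := by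
        gcongr
    _ = _ := by ring

/-- (Lemma 7 of the paper.) If `|S \ P_opt| ≤ k' < |S|` and `H` is a
`c`-approximate `(k+k')`-means solution on `S`, then the cost of the star-shaped
transformation of `S_opt` with respect to `H`, namely `Σ_j |S∩C*_j|·dist(o*_j,H)²`, is at
most `(2+2c)·Σ_j Σ_{q∈S∩C*_j} ‖q − o*_j‖²`. -/
theorem star_transformed_sample_cost_bound {D : ℕ} (k : ℕ) (hk : 0 < k)
    (P Popt : Finset (EuclideanSpace ℝ (Fin D))) (hPopt : Popt ⊆ P)
    (C : Fin k → Finset (EuclideanSpace ℝ (Fin D)))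
    (hCne : ∀ j, (C j).Nonempty)
    (hCsub : ∀ j, C j ⊆ Popt)
    (hCdisj : ∀ j j', j ≠ j' → Disjoint (C j) (C j'))
    (hCcover : ∀ p ∈ Popt, ∃ j, p ∈ C j)
    (o : Fin k → EuclideanSpace ℝ (Fin D))
    (S : Finset (EuclideanSpace ℝ (Fin D))) (hS : S ⊆ P)
    (k' : ℕ) (hk'S : k' < S.card) (houtl : (S \ Popt).card ≤ k')
    (c : ℝ) (hc : 1 ≤ c)
    (H : Finset (EuclideanSpace ℝ (Fin D))) (hH : H.Nonempty)
    (happrox : ∀ K : Finset (EuclideanSpace ℝ (Fin D)), K.Nonempty → K.card = k + k' →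
      costSq S H ≤ c * costSq S K) :
    ∑ j : Fin k, ((S ∩ C j).card : ℝ) *
        Metric.infDist (o j) (H : Set (EuclideanSpace ℝ (Fin D))) ^ 2 ≤
      (2 + 2 * c) * ∑ j : Fin k, ∑ q ∈ S ∩ C j, ‖q - o j‖ ^ 2 :=
  star_transformed_sample_cost_bound_general k hk Popt C hCdisj hCcover o S k' houtl c hc H happrox
end

section
/- Let P ⊆ ℝ^D be finite with |P| = n, let P_opt ⊆ P be partitioned into nonempty clusters C*_1,…,C*_k with |C*_j| ≥ (ε₁/k)·n for every j (ε₁ > 0), and let η, δ ∈ (0,1) and ε₂ > 0 with t := η(1−δ)·(ε₁/ε₂) > 1. Let S ⊆ P be a nonempty finite subset with |S ∩ C*_j| ≥ (1−δ)·(|C*_j|/n)·|S| for every j, and let S_in ⊆ S satisfy |S \ S_in| ≤ (ε₂/(k·η))·|S|. Then for every j ∈ {1,…,k}: |S_in ∩ C*_j| ≥ (1 − 1/t)·(1−δ)·(|C*_j|/n)·|S|; equivalently, |C*_j| ≤ (n/|S|)·( t/((t−1)(1−δ)) )·|S_in ∩ C*_j|. -/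
/-!
Every sample point of `C*_j` is either kept in `S_in` or discarded, so
`|S_in ∩ C*_j| ≥ |S ∩ C*_j| - |S \ S_in|`. The definition of `t` rewrites the discard budget
`ε₂/(kη)` as `(1/t)(1-δ)(ε₁/k)`, and `ε₁/k ≤ |C*_j|/n`, so the discarded points are at most a
`1/t` fraction of the guaranteed `(1-δ)(|C*_j|/n)|S|` sample points of `C*_j`.
-/

open scoped Classical
open Finset

theorem Finset.card_inter_le_card_inter_add_card_sdiff {α : Type*} [DecidableEq α]
    (s s' u : Finset α) : #(s ∩ u) ≤ #(s' ∩ u) + #(s \ s') := by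
  calc #(s ∩ u) ≤ #((s' ∩ u) ∪ (s \ s')) := card_le_card fun x hx => by
          by_cases hx' : x ∈ s' <;> simp_all
    _ ≤ #(s' ∩ u) + #(s \ s') := card_union_le _ _

lemma discard_rate_eq {k η δ ε₁ ε₂ t : ℝ} (ht : t = η * (1 - δ) * (ε₁ / ε₂)) (ht0 : t ≠ 0) :
    ε₂ / (k * η) = t⁻¹ * (1 - δ) * (ε₁ / k) := by
  subst ht
  have hη : η ≠ 0 := fun h => ht0 (by simp [h])
  have hδ : 1 - δ ≠ 0 := fun h => ht0 (by simp [h])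
  have hε₁ : ε₁ ≠ 0 := fun h => ht0 (by simp [h])
  have hε₂ : ε₂ ≠ 0 := fun h => ht0 (by simp [h])
  rcases eq_or_ne k 0 with rfl | hk
  · simp
  · field_simp

lemma le_mul_of_one_sub_inv_mul_le {t δ c n s b : ℝ} (ht : 1 < t) (hδ : δ < 1) (hn : 0 < n)
    (hs : 0 < s) (h : (1 - 1 / t) * (1 - δ) * (c / n) * s ≤ b) :
    c ≤ n / s * (t / ((t - 1) * (1 - δ))) * b := by
  have ht1 : 0 < t - 1 := by linarith
  have hδ1 : 0 < 1 - δ := by linarith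
  have hcancel : n / s * (t / ((t - 1) * (1 - δ))) * ((1 - 1 / t) * (1 - δ) * (c / n) * s) = c := by
    field_simp
  have hscale : 0 ≤ n / s * (t / ((t - 1) * (1 - δ))) := by positivity
  calc c = n / s * (t / ((t - 1) * (1 - δ))) * ((1 - 1 / t) * (1 - δ) * (c / n) * s) := hcancel.symm
    _ ≤ n / s * (t / ((t - 1) * (1 - δ))) * b := by gcongr

theorem inlier_sample_cluster_count_bound_general {D : ℕ} (k n : ℕ)
    (P : Finset (EuclideanSpace ℝ (Fin D)))
    (hPcard : P.card = n)
    (C : Fin k → Finset (EuclideanSpace ℝ (Fin D)))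
    (ε₁ ε₂ : ℝ)
    (hsig : ∀ j, (ε₁ / k) * n ≤ ((C j).card : ℝ))
    (η δ : ℝ) (hδ1 : δ < 1)
    (t : ℝ) (ht : t = η * (1 - δ) * (ε₁ / ε₂)) (ht1 : 1 < t)
    (S : Finset (EuclideanSpace ℝ (Fin D))) (hS : S ⊆ P) (hSne : S.Nonempty)
    (hSC : ∀ j, (1 - δ) * (((C j).card : ℝ) / n) * S.card ≤ ((S ∩ C j).card : ℝ))
    (Sin : Finset (EuclideanSpace ℝ (Fin D)))
    (hdiscard : ((S \ Sin).card : ℝ) ≤ (ε₂ / (k * η)) * S.card) :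
    ∀ j : Fin k,
      (1 - 1 / t) * (1 - δ) * (((C j).card : ℝ) / n) * S.card ≤
          ((Sin ∩ C j).card : ℝ) ∧
        ((C j).card : ℝ) ≤
          ((n : ℝ) / S.card) * (t / ((t - 1) * (1 - δ))) * ((Sin ∩ C j).card : ℝ) := by
  intro j
  have hs : (0 : ℝ) < S.card := by exact_mod_cast hSne.card_pos
  have hn : (0 : ℝ) < n := by
    exact_mod_cast hPcard ▸ hSne.card_pos.trans_le (card_le_card hS)
  have hrate : ε₁ / k ≤ ((C j).card : ℝ) / n := (le_div_iff₀ hn).2 (hsig j)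
  have hdiscarded : ((S \ Sin).card : ℝ) ≤ t⁻¹ * (1 - δ) * (((C j).card : ℝ) / n) * S.card := by
    have : 0 ≤ 1 - δ := by linarith
    calc ((S \ Sin).card : ℝ) ≤ (ε₂ / (k * η)) * S.card := hdiscard
      _ = t⁻¹ * (1 - δ) * (ε₁ / k) * S.card := by rw [discard_rate_eq ht (by linarith : 0 < t).ne']
      _ ≤ t⁻¹ * (1 - δ) * (((C j).card : ℝ) / n) * S.card := by gcongr
  have hsplit : ((S ∩ C j).card : ℝ) ≤ (Sin ∩ C j).card + (S \ Sin).card := by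
    exact_mod_cast card_inter_le_card_inter_add_card_sdiff S Sin (C j)
  have hkept : (1 - 1 / t) * (1 - δ) * (((C j).card : ℝ) / n) * S.card ≤ (Sin ∩ C j).card := by
    calc (1 - 1 / t) * (1 - δ) * (((C j).card : ℝ) / n) * S.card
        = (1 - δ) * (((C j).card : ℝ) / n) * S.card
          - t⁻¹ * (1 - δ) * (((C j).card : ℝ) / n) * S.card := by ring
      _ ≤ (S ∩ C j).card - (S \ Sin).card := sub_le_sub (hSC j) hdiscarded
      _ ≤ (Sin ∩ C j).card := by linarith
  exact ⟨hkept, le_mul_of_one_sub_inv_mul_le ht1 hδ1 hn hs hkept⟩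

/-- (Lemma 9 of the paper.) If `|C*_j| ≥ (ε₁/k)·n`,
`t = η(1−δ)·(ε₁/ε₂) > 1`, `|S ∩ C*_j| ≥ (1−δ)(|C*_j|/n)|S|`, and `S_in ⊆ S` discards at most
`(ε₂/(kη))|S|` points, then `|S_in ∩ C*_j| ≥ (1 − 1/t)(1−δ)(|C*_j|/n)|S|`; equivalently,
`|C*_j| ≤ (n/|S|)·(t/((t−1)(1−δ)))·|S_in ∩ C*_j|`. -/
theorem inlier_sample_cluster_count_bound {D : ℕ} (k n : ℕ) (hk : 0 < k)
    (P Popt : Finset (EuclideanSpace ℝ (Fin D)))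
    (hPcard : P.card = n) (hPopt : Popt ⊆ P)
    (C : Fin k → Finset (EuclideanSpace ℝ (Fin D)))
    (hCne : ∀ j, (C j).Nonempty)
    (hCsub : ∀ j, C j ⊆ Popt)
    (hCdisj : ∀ j j', j ≠ j' → Disjoint (C j) (C j'))
    (hCcover : ∀ p ∈ Popt, ∃ j, p ∈ C j)
    (ε₁ ε₂ : ℝ) (hε₁ : 0 < ε₁) (hε₂ : 0 < ε₂)
    (hsig : ∀ j, (ε₁ / k) * n ≤ ((C j).card : ℝ))
    (η δ : ℝ) (hη0 : 0 < η) (hη1 : η < 1) (hδ0 : 0 < δ) (hδ1 : δ < 1)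
    (t : ℝ) (ht : t = η * (1 - δ) * (ε₁ / ε₂)) (ht1 : 1 < t)
    (S : Finset (EuclideanSpace ℝ (Fin D))) (hS : S ⊆ P) (hSne : S.Nonempty)
    (hSC : ∀ j, (1 - δ) * (((C j).card : ℝ) / n) * S.card ≤ ((S ∩ C j).card : ℝ))
    (Sin : Finset (EuclideanSpace ℝ (Fin D))) (hSin : Sin ⊆ S)
    (hdiscard : ((S \ Sin).card : ℝ) ≤ (ε₂ / (k * η)) * S.card) :
    ∀ j : Fin k,
      (1 - 1 / t) * (1 - δ) * (((C j).card : ℝ) / n) * S.card ≤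
          ((Sin ∩ C j).card : ℝ) ∧
        ((C j).card : ℝ) ≤
          ((n : ℝ) / S.card) * (t / ((t - 1) * (1 - δ))) * ((Sin ∩ C j).card : ℝ) :=
  inlier_sample_cluster_count_bound_general k n P hPcard C ε₁ ε₂ hsig η δ hδ1 t ht ht1 S hS hSne hSC
    Sin hdiscard
end
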